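/- arXiv:math/0411282 — 7 statements merged into one kernel-verified Lean document; each statement's English description precedes it below -/
import Mathlib

section
/- For every x > 0 one has m(x) < x − 1/3 + 1/(18x). -/
/-!
If `T` has density `e^{-t} t^{x-1} / Γ(x)`, then `Y = T^{1/3}` has median `μ = m(x)^{1/3}`, mean
`Γ(x + 1/3) / Γ(x)` and density `f(y) ∝ y^{3x-1} e^{-y³}`. The difference
`log f(μ+s) - log f(μ-s)` vanishes at `s = 0` and its derivative changes sign at most once on
`(0, μ)`, from `-` to `+`; hence so does `f(μ+s) - f(μ-s)`, say at `s = c ≤ μ`. Integrating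
`(s - c)(f(μ+s) - f(μ-s)) ≥ 0` over `(0, μ)`, and using that by the median property
`∫_0^μ (f(μ+s) - f(μ-s)) ds` is minus the mass of `Y` beyond `2μ`, shows that the median of `Y`
is at most its mean: `m(x) ≤ (Γ(x + 1/3) / Γ(x))³`.

Log-convexity of `Γ` gives `3 log Γ(z + 1/3) - 3 log Γ(z) - log z + 1/(3z) = O(1/z)`, and this
quantity increases under `z ↦ z + 1` for `z ≥ 1`, so it is nonpositive. At `z = x + 1`, together
with `e^u ≥ 1 + u + u²/2`, this bounds `(Γ(x + 1/3) / Γ(x))³` strictly by `x - 1/3 + 1/(18x)`.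
-/

open MeasureTheory Filter Set Real Topology

def SingleCrossingOn (g : ℝ → ℝ) (s : Set ℝ) : Prop :=
  ∀ ⦃p⦄, p ∈ s → ∀ ⦃q⦄, q ∈ s → p ≤ q → 0 < g p → 0 ≤ g q

namespace SingleCrossingOn

variable {g g' : ℝ → ℝ} {a b : ℝ}

theorem exists_sub_mul_nonneg (hg : SingleCrossingOn g (Ioo a b)) :
    ∃ c ≤ b, ∀ s ∈ Ioo a b, 0 ≤ (s - c) * g s := by
  set S := insert b {s | s ∈ Ioo a b ∧ 0 < g s}
  have hS : BddBelow S := bddBelow_insert.2 (bddBelow_Ioo.mono fun s hs => hs.1)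
  refine ⟨sInf S, csInf_le hS (mem_insert b _), fun s hs => ?_⟩
  rcases lt_trichotomy s (sInf S) with hlt | heq | hgt
  · have hgs : g s ≤ 0 := by
      by_contra! hpos
      exact (csInf_le hS (mem_insert_of_mem b ⟨hs, hpos⟩)).not_gt hlt
    exact mul_nonneg_of_nonpos_of_nonpos (by linarith) hgs
  · simp [heq]
  · obtain ⟨q, hq, hqs⟩ := exists_lt_of_csInf_lt (insert_nonempty b _) hgt
    rcases hq with rfl | ⟨hq, hgq⟩
    · exact absurd hs.2 hqs.not_gt
    · exact mul_nonneg (by linarith) (hg hq hs hqs.le hgq)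

theorem of_hasDerivAt (hcont : ContinuousOn g (Ico a b))
    (hderiv : ∀ s ∈ Ioo a b, HasDerivAt g (g' s) s) (ha : g a = 0)
    (hg' : SingleCrossingOn g' (Ioo a b)) : SingleCrossingOn g (Ioo a b) := by
  intro p hp q hq hpq hgp
  obtain ⟨r, hr, hr_slope⟩ := exists_hasDerivAt_eq_slope g g' hp.1
    (hcont.mono (Icc_subset_Ico_right hp.2)) fun s hs => hderiv s ⟨hs.1, hs.2.trans hp.2⟩
  have hg'r : 0 < g' r := by
    rw [hr_slope, ha, sub_zero]
    exact div_pos hgp (sub_pos.2 hp.1)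
  have hmono : MonotoneOn g (Icc p q) := by
    refine monotoneOn_of_hasDerivWithinAt_nonneg (f' := g') (convex_Icc p q)
      (hcont.mono (Icc_subset_Ico hp.1.le hq.2)) (fun s hs => ?_) fun s hs => ?_ <;>
      rw [interior_Icc] at hs
    · exact (hderiv s ⟨hp.1.trans hs.1, hs.2.trans hq.2⟩).hasDerivWithinAt
    · exact hg' ⟨hr.1, hr.2.trans hp.2⟩ ⟨hp.1.trans hs.1, hs.2.trans hq.2⟩
        (hr.2.trans hs.1).le hg'r
  exact hgp.le.trans (hmono (left_mem_Icc.2 hpq) (right_mem_Icc.2 hpq) hpq)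

end SingleCrossingOn

section MedianMean

variable {f : ℝ → ℝ} {μ : ℝ}

theorem integral_sub_mul_comp_add {r c : ℝ} (hf : IntervalIntegrable f volume μ (μ + r)) :
    ∫ s in 0..r, (s - c) * f (μ + s)
      = (∫ y in μ..μ + r, (y - μ) * f y) - c * ∫ y in μ..μ + r, f y := by
  calc ∫ s in 0..r, (s - c) * f (μ + s)
      = ∫ s in 0..r, (fun y => (y - μ) * f y - c * f y) (μ + s) :=
        intervalIntegral.integral_congr fun s _ => by ring
    _ = ∫ y in μ..μ + r, ((y - μ) * f y - c * f y) :=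
        (intervalIntegral.integral_comp_add_left (a := 0) (b := r)
          (fun y => (y - μ) * f y - c * f y) μ).trans (by rw [add_zero])
    _ = _ := by
        rw [intervalIntegral.integral_sub (hf.continuousOn_mul (by fun_prop)) (hf.const_mul c),
          intervalIntegral.integral_const_mul]

theorem integral_sub_mul_comp_sub {r c : ℝ} (hf : IntervalIntegrable f volume (μ - r) μ) :
    ∫ s in 0..r, (s - c) * f (μ - s)
      = -(∫ y in μ - r..μ, (y - μ) * f y) - c * ∫ y in μ - r..μ, f y := by
  have hneg : IntervalIntegrable (fun y => -((y - μ) * f y)) volume (μ - r) μ :=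
    (hf.continuousOn_mul (g := fun y => y - μ) (by fun_prop)).neg
  calc ∫ s in 0..r, (s - c) * f (μ - s)
      = ∫ s in 0..r, (fun y => -((y - μ) * f y) - c * f y) (μ - s) :=
        intervalIntegral.integral_congr fun s _ => by ring
    _ = ∫ y in μ - r..μ, (-((y - μ) * f y) - c * f y) :=
        (intervalIntegral.integral_comp_sub_left (a := 0) (b := r)
          (fun y => -((y - μ) * f y) - c * f y) μ).trans (by rw [sub_zero])
    _ = _ := by
        rw [intervalIntegral.integral_sub hneg (hf.const_mul c), intervalIntegral.integral_neg,
          intervalIntegral.integral_const_mul]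

theorem mul_integral_sub_integral_le_integral_sub_mul {r c : ℝ} (hr : 0 ≤ r)
    (hf : IntervalIntegrable f volume (μ - r) (μ + r))
    (hc : ∀ s ∈ Ioo 0 r, 0 ≤ (s - c) * (f (μ + s) - f (μ - s))) :
    c * ((∫ y in μ..μ + r, f y) - ∫ y in μ - r..μ, f y)
      ≤ ∫ y in μ - r..μ + r, (y - μ) * f y := by
  have hμ : μ ∈ uIcc (μ - r) (μ + r) := mem_uIcc_of_le (by linarith) (by linarith)
  have hleft : IntervalIntegrable f volume (μ - r) μ :=
    hf.mono_set (uIcc_subset_uIcc left_mem_uIcc hμ)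
  have hright : IntervalIntegrable f volume μ (μ + r) :=
    hf.mono_set (uIcc_subset_uIcc hμ right_mem_uIcc)
  have hnonneg : 0 ≤ ∫ s in 0..r, (s - c) * (f (μ + s) - f (μ - s)) := by
    rw [intervalIntegral.integral_of_le hr, integral_Ioc_eq_integral_Ioo]
    exact setIntegral_nonneg measurableSet_Ioo hc
  have hplus_int : IntervalIntegrable (fun s => (s - c) * f (μ + s)) volume 0 r :=
    (by simpa using hright.comp_add_left μ : IntervalIntegrable (fun s => f (μ + s)) volume 0 r)
      |>.continuousOn_mul (by fun_prop)
  have hminus_int : IntervalIntegrable (fun s => (s - c) * f (μ - s)) volume 0 r :=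
    (by simpa using (hleft.comp_sub_left μ).symm :
      IntervalIntegrable (fun s => f (μ - s)) volume 0 r).continuousOn_mul (by fun_prop)
  simp_rw [mul_sub] at hnonneg
  rw [intervalIntegral.integral_sub hplus_int hminus_int, integral_sub_mul_comp_add hright,
    integral_sub_mul_comp_sub hleft] at hnonneg
  rw [← intervalIntegral.integral_add_adjacent_intervals (hleft.continuousOn_mul (by fun_prop))
    (hright.continuousOn_mul (by fun_prop))]
  linarith

theorem mul_integral_Ioi_le_integral_Ioi_mul_of_median (hμ : 0 < μ)
    (hf : IntegrableOn f (Ioi 0)) (hyf : IntegrableOn (fun y => y * f y) (Ioi 0))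
    (hf_nonneg : ∀ y, 0 < y → 0 ≤ f y)
    (hmed : ∫ y in 0..μ, f y = (∫ y in Ioi 0, f y) / 2)
    (hcross : SingleCrossingOn (fun s => f (μ + s) - f (μ - s)) (Ioo 0 μ)) :
    μ * ∫ y in Ioi 0, f y ≤ ∫ y in Ioi 0, y * f y := by
  obtain ⟨c, hcμ, hc⟩ := hcross.exists_sub_mul_nonneg
  have hf_interval : ∀ a b, 0 ≤ a → a ≤ b → IntervalIntegrable f volume a b :=
    fun a b ha hab => (intervalIntegrable_iff_integrableOn_Ioc_of_le hab).2
      (hf.mono_set fun y hy => ha.trans_lt hy.1)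
  have htail_sub : Ioi (μ + μ) ⊆ Ioi 0 := Ioi_subset_Ioi (by linarith)
  set T := ∫ y in Ioi (μ + μ), f y
  have hT : 0 ≤ T := setIntegral_nonneg measurableSet_Ioi fun y hy => hf_nonneg y (htail_sub hy)
  have htail : (μ + μ) * T ≤ ∫ y in Ioi (μ + μ), y * f y := by
    rw [← integral_const_mul]
    refine setIntegral_mono_on ((hf.mono_set htail_sub).const_mul _) (hyf.mono_set htail_sub)
      measurableSet_Ioi fun y hy => ?_
    exact mul_le_mul_of_nonneg_right (le_of_lt hy) (hf_nonneg y (htail_sub hy))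
  have hsplit_f : (∫ y in 0..μ, f y) + (∫ y in μ..μ + μ, f y) + T = ∫ y in Ioi 0, f y := by
    rw [intervalIntegral.integral_add_adjacent_intervals (hf_interval 0 μ le_rfl hμ.le)
      (hf_interval μ (μ + μ) hμ.le (by linarith)),
      intervalIntegral.integral_interval_add_Ioi hf (hf.mono_set htail_sub)]
  have hsplit_yf : (∫ y in 0..μ + μ, y * f y) + ∫ y in Ioi (μ + μ), y * f y
      = ∫ y in Ioi 0, y * f y :=
    intervalIntegral.integral_interval_add_Ioi hyf (hyf.mono_set htail_sub)
  have hf02 := hf_interval 0 (μ + μ) le_rfl (by linarith)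
  have hcentered : ∫ y in 0..μ + μ, (y - μ) * f y
      = (∫ y in 0..μ + μ, y * f y) - μ * ((∫ y in 0..μ, f y) + ∫ y in μ..μ + μ, f y) := by
    rw [intervalIntegral.integral_add_adjacent_intervals (hf_interval 0 μ le_rfl hμ.le)
      (hf_interval μ (μ + μ) hμ.le (by linarith)), ← intervalIntegral.integral_const_mul,
      ← intervalIntegral.integral_sub (hf02.continuousOn_mul (by fun_prop)) (hf02.const_mul μ)]
    exact intervalIntegral.integral_congr fun y _ => by ring
  have hpair := mul_integral_sub_integral_le_integral_sub_mul (μ := μ) (r := μ) (c := c) hμ.le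
    (by rwa [sub_self]) hc
  rw [sub_self, hcentered,
    show (∫ y in μ..μ + μ, f y) - ∫ y in 0..μ, f y = -T by linarith] at hpair
  nlinarith [mul_nonneg (sub_nonneg.2 hcμ) hT]

end MedianMean

section PowSubstitution

variable {n : ℕ}

theorem integral_comp_pow_mul_Ioi (g : ℝ → ℝ) (hn : n ≠ 0) :
    ∫ y in Ioi 0, g (y ^ n) * (n * y ^ (n - 1)) = ∫ t in Ioi 0, g t := by
  rw [← integral_comp_rpow_Ioi_of_pos (g := g) (Nat.cast_pos.2 (Nat.pos_of_ne_zero hn))]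
  refine setIntegral_congr_fun measurableSet_Ioi fun y _ => ?_
  rw [← Nat.cast_pred (Nat.pos_of_ne_zero hn), rpow_natCast, rpow_natCast, smul_eq_mul, mul_comm]

theorem integrableOn_comp_pow_mul_Ioi_iff (g : ℝ → ℝ) (hn : n ≠ 0) :
    IntegrableOn (fun y => g (y ^ n) * (n * y ^ (n - 1))) (Ioi 0) ↔ IntegrableOn g (Ioi 0) := by
  rw [← integrableOn_Ioi_comp_rpow_iff g (Nat.cast_ne_zero.2 hn)]
  refine integrableOn_congr_fun (fun y _ => ?_) measurableSet_Ioi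
  rw [← Nat.cast_pred (Nat.pos_of_ne_zero hn), rpow_natCast, rpow_natCast, smul_eq_mul, mul_comm,
    Nat.abs_cast]

end PowSubstitution

theorem le_of_tendsto_of_le_add_one {f : ℝ → ℝ} {z₀ L : ℝ}
    (hstep : ∀ z, z₀ ≤ z → f z ≤ f (z + 1)) (hlim : Tendsto f atTop (𝓝 L)) {z : ℝ}
    (hz : z₀ ≤ z) : f z ≤ L := by
  have hn : ∀ n : ℕ, f z ≤ f (z + n) := by
    intro n
    induction n with
    | zero => simp
    | succ n ih =>
      rw [Nat.cast_succ, ← add_assoc]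
      exact ih.trans (hstep _ (by linarith [n.cast_nonneg (α := ℝ)]))
  exact ge_of_tendsto (hlim.comp (tendsto_atTop_add_const_left _ z tendsto_natCast_atTop_atTop))
    (Eventually.of_forall hn)

-- `Γ(x)` times the density of `T ^ (1/3)` for `T` Gamma(x)-distributed: substitute `t = y ^ 3`
noncomputable def cbrtGammaDensity (x y : ℝ) : ℝ :=
  rexp (-y ^ 3) * (y ^ 3) ^ (x - 1) * (3 * y ^ 2)

noncomputable def cbrtGammaLogDensity (x y : ℝ) : ℝ := (3 * x - 1) * log y - y ^ 3

section cbrtGammaDensity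

variable {x y : ℝ}

theorem cbrtGammaDensity_eq_exp (hy : 0 < y) :
    cbrtGammaDensity x y = 3 * rexp (cbrtGammaLogDensity x y) := by
  have hy2 : y ^ 2 = rexp (2 * log y) := by
    rw [show (2 : ℝ) * log y = log (y ^ 2) by simp [Real.log_pow], exp_log (by positivity)]
  rw [cbrtGammaDensity, cbrtGammaLogDensity, rpow_def_of_pos (by positivity), Real.log_pow, hy2,
    mul_comm 3, ← mul_assoc, ← exp_add, ← exp_add]
  push_cast
  ring_nf

theorem cbrtGammaDensity_pos (hy : 0 < y) : 0 < cbrtGammaDensity x y := by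
  rw [cbrtGammaDensity_eq_exp hy]
  positivity

theorem mul_cbrtGammaDensity (hy : 0 < y) :
    y * cbrtGammaDensity x y = cbrtGammaDensity (x + 1 / 3) y := by
  rw [cbrtGammaDensity_eq_exp hy, cbrtGammaDensity_eq_exp hy, cbrtGammaLogDensity,
    cbrtGammaLogDensity, mul_left_comm, ← exp_log hy, ← exp_add, exp_log hy]
  ring_nf

theorem hasDerivAt_cbrtGammaLogDensity (hy : y ≠ 0) :
    HasDerivAt (cbrtGammaLogDensity x) ((3 * x - 1) * y⁻¹ - 3 * y ^ 2) y := by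
  have hcube : HasDerivAt (fun y : ℝ => y ^ 3) (3 * y ^ 2) y := by
    simpa using hasDerivAt_pow 3 y
  exact ((hasDerivAt_log hy).const_mul (3 * x - 1)).fun_sub hcube

theorem singleCrossingOn_cbrtGammaLogDensity_sub (x μ : ℝ) :
    SingleCrossingOn (fun s => cbrtGammaLogDensity x (μ + s) - cbrtGammaLogDensity x (μ - s))
      (Ioo 0 μ) := by
  have hderiv : ∀ s, -μ < s → s < μ → HasDerivAt
      (fun s => cbrtGammaLogDensity x (μ + s) - cbrtGammaLogDensity x (μ - s))
      ((3 * x - 1) * ((μ + s)⁻¹ + (μ - s)⁻¹) - 3 * ((μ + s) ^ 2 + (μ - s) ^ 2)) s := by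
    intro s hs₁ hs₂
    have hplus := (hasDerivAt_cbrtGammaLogDensity (x := x) (by linarith : μ + s ≠ 0)).comp s
      ((hasDerivAt_id s).const_add μ)
    have hminus := (hasDerivAt_cbrtGammaLogDensity (x := x) (by linarith : μ - s ≠ 0)).comp s
      ((hasDerivAt_id s).const_sub μ)
    exact (hplus.fun_sub hminus).congr_deriv (by ring)
  refine SingleCrossingOn.of_hasDerivAt
    (fun s hs => (hderiv s (by linarith [hs.1, hs.2]) hs.2).continuousAt.continuousWithinAt)
    (fun s hs => hderiv s (by linarith [hs.1, hs.2]) hs.2) (by simp) ?_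
  intro p hp q hq hpq hpos
  dsimp only at hpos ⊢
  -- the numerator increases with `s`
  have key : ∀ s ∈ Ioo 0 μ,
      (3 * x - 1) * ((μ + s)⁻¹ + (μ - s)⁻¹) - 3 * ((μ + s) ^ 2 + (μ - s) ^ 2)
        = 2 * ((3 * x - 1) * μ - 3 * (μ ^ 4 - s ^ 4)) / ((μ + s) * (μ - s)) := by
    intro s hs
    have : μ - s ≠ 0 := by linarith [hs.2]
    have : μ + s ≠ 0 := by linarith [hs.1, hs.2]
    field_simp
    ring
  have hden : ∀ s ∈ Ioo 0 μ, 0 < (μ + s) * (μ - s) := fun s hs =>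
    mul_pos (by linarith [hs.1, hs.2]) (by linarith [hs.2])
  rw [key p hp, div_pos_iff_of_pos_right (hden p hp)] at hpos
  rw [key q hq]
  exact div_nonneg (by nlinarith [pow_le_pow_left₀ hp.1.le hpq 4]) (hden q hq).le

theorem singleCrossingOn_cbrtGammaDensity_sub (x μ : ℝ) :
    SingleCrossingOn (fun s => cbrtGammaDensity x (μ + s) - cbrtGammaDensity x (μ - s))
      (Ioo 0 μ) := by
  intro p hp q hq hpq hpos
  have hμs : ∀ s ∈ Ioo 0 μ, 0 < μ + s ∧ 0 < μ - s := fun s hs =>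
    ⟨by linarith [hs.1, hs.2], by linarith [hs.2]⟩
  simp only [sub_pos, sub_nonneg, cbrtGammaDensity_eq_exp (hμs p hp).1,
    cbrtGammaDensity_eq_exp (hμs p hp).2, cbrtGammaDensity_eq_exp (hμs q hq).1,
    cbrtGammaDensity_eq_exp (hμs q hq).2, mul_lt_mul_iff_right₀ three_pos,
    mul_le_mul_iff_right₀ three_pos, exp_lt_exp, exp_le_exp] at hpos ⊢
  simpa using singleCrossingOn_cbrtGammaLogDensity_sub x μ hp hq hpq (sub_pos.2 hpos)

theorem integral_cbrtGammaDensity_eq (x : ℝ) :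
    ∫ y in Ioi 0, cbrtGammaDensity x y = ∫ t in Ioi 0, rexp (-t) * t ^ (x - 1) := by
  simpa [cbrtGammaDensity] using
    integral_comp_pow_mul_Ioi (fun t => rexp (-t) * t ^ (x - 1)) three_ne_zero

theorem integral_cbrtGammaDensity (hx : 0 < x) :
    ∫ y in Ioi 0, cbrtGammaDensity x y = Gamma x := by
  rw [integral_cbrtGammaDensity_eq, Gamma_eq_integral hx]

theorem integrableOn_cbrtGammaDensity (hx : 0 < x) :
    IntegrableOn (cbrtGammaDensity x) (Ioi 0) := by
  show IntegrableOn (fun y => cbrtGammaDensity x y) (Ioi 0)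
  have := (integrableOn_comp_pow_mul_Ioi_iff (fun t => rexp (-t) * t ^ (x - 1)) three_ne_zero).2
    (GammaIntegral_convergent hx)
  simpa [cbrtGammaDensity] using this

theorem integral_mul_cbrtGammaDensity (hx : 0 < x) :
    ∫ y in Ioi 0, y * cbrtGammaDensity x y = Gamma (x + 1 / 3) := by
  rw [setIntegral_congr_fun measurableSet_Ioi fun y hy => mul_cbrtGammaDensity hy,
    integral_cbrtGammaDensity (by positivity)]

theorem integrableOn_mul_cbrtGammaDensity (hx : 0 < x) :
    IntegrableOn (fun y => y * cbrtGammaDensity x y) (Ioi 0) :=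
  (integrableOn_cbrtGammaDensity (by positivity : 0 < x + 1 / 3)).congr_fun
    (fun y hy => (mul_cbrtGammaDensity hy).symm) measurableSet_Ioi

theorem intervalIntegral_cbrtGammaDensity (x r : ℝ) :
    ∫ y in 0..r, cbrtGammaDensity x y = ∫ t in 0..r ^ 3, rexp (-t) * t ^ (x - 1) := by
  have h := intervalIntegral.integral_comp_mul_deriv_of_deriv_nonneg (a := 0) (b := r)
    (f := fun y => y ^ 3) (f' := fun y => 3 * y ^ 2) (g := fun t => rexp (-t) * t ^ (x - 1))
    (by fun_prop) (fun y _ => by simpa using hasDerivAt_pow 3 y) (fun y _ => by positivity)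
  rw [zero_pow three_ne_zero] at h
  exact h

end cbrtGammaDensity

section GammaRatio

variable {z a : ℝ}

theorem log_Gamma_add_le (hz : 0 < z) (ha₀ : 0 ≤ a) (ha₁ : a ≤ 1) :
    log (Gamma (z + a)) ≤ log (Gamma z) + a * log z := by
  have h := convexOn_log_Gamma.2 (mem_Ioi.2 hz) (mem_Ioi.2 (by linarith : 0 < z + 1))
    (by linarith : 0 ≤ 1 - a) ha₀ (by ring)
  simp only [smul_eq_mul, Function.comp_apply] at h
  rw [show (1 - a) * z + a * (z + 1) = z + a by ring, Gamma_add_one hz.ne',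
    log_mul hz.ne' (Gamma_pos_of_pos hz).ne'] at h
  linear_combination h

theorem log_Gamma_add_one_le (hz : 0 < z) (ha₀ : 0 ≤ a) (ha₁ : a ≤ 1) :
    log (Gamma (z + 1)) ≤ log (Gamma (z + a)) + (1 - a) * log (z + a) := by
  have hza : 0 < z + a := by linarith
  have h := convexOn_log_Gamma.2 (mem_Ioi.2 hza) (mem_Ioi.2 (by linarith : 0 < z + a + 1))
    ha₀ (by linarith : 0 ≤ 1 - a) (by ring)
  simp only [smul_eq_mul, Function.comp_apply] at h
  rw [show a * (z + a) + (1 - a) * (z + a + 1) = z + 1 by ring, Gamma_add_one hza.ne',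
    log_mul hza.ne' (Gamma_pos_of_pos hza).ne'] at h
  linear_combination h

noncomputable def gammaThirdDefect (z : ℝ) : ℝ :=
  3 * (log (Gamma (z + 1 / 3)) - log (Gamma z)) - log z + 1 / (3 * z)

theorem abs_gammaThirdDefect_le (hz : 0 < z) : |gammaThirdDefect z| ≤ 1 / (3 * z) := by
  have hup := log_Gamma_add_le hz (a := 1 / 3) (by norm_num) (by norm_num)
  have hlow := log_Gamma_add_one_le hz (a := 1 / 3) (by norm_num) (by norm_num)
  rw [Gamma_add_one hz.ne', log_mul hz.ne' (Gamma_pos_of_pos hz).ne'] at hlow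
  have hlog : log (z + 1 / 3) - log z ≤ 1 / (3 * z) := by
    rw [← log_div (by positivity) hz.ne']
    have h := log_le_sub_one_of_pos (show 0 < (z + 1 / 3) / z by positivity)
    have : (z + 1 / 3) / z - 1 = 1 / (3 * z) := by field_simp; ring
    linarith
  rw [abs_le, gammaThirdDefect]
  constructor <;> linarith

theorem tendsto_gammaThirdDefect : Tendsto gammaThirdDefect atTop (𝓝 0) := by
  have h : Tendsto (fun z : ℝ => 1 / (3 * z)) atTop (𝓝 0) :=
    tendsto_const_nhds.div_atTop (tendsto_id.const_mul_atTop three_pos)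
  refine squeeze_zero_norm' ?_ h
  filter_upwards [eventually_gt_atTop 0] with z hz
  exact abs_gammaThirdDefect_le hz

theorem gammaThirdDefect_le_add_one (hz : 1 ≤ z) :
    gammaThirdDefect z ≤ gammaThirdDefect (z + 1) := by
  have hz₀ : 0 < z := by linarith
  have hz₃ : 0 < z + 1 / 3 := by linarith
  set w := (9 * z + 1) / (27 * z ^ 2 * (z + 1))
  have hw : 0 ≤ w := by positivity
  have hlog : 3 * log (z + 1 / 3) - 2 * log z - log (z + 1) = log (1 + w) := by
    rw [show 1 + w = (z + 1 / 3) ^ 3 / (z ^ 2 * (z + 1)) by simp only [w]; field_simp; ring,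
      log_div (by positivity) (by positivity), log_mul (by positivity) (by positivity),
      log_pow, log_pow]
    push_cast
    ring
  have hw_bound : 1 / (3 * z * (z + 1)) ≤ 2 * w / (w + 2) := by
    rw [div_le_div_iff₀ (by positivity) (by positivity)]
    simp only [w]
    field_simp
    nlinarith
  have hlog_lower := le_log_one_add_of_nonneg hw
  rw [gammaThirdDefect, gammaThirdDefect, show z + 1 + 1 / 3 = z + 1 / 3 + 1 by ring,
    Gamma_add_one hz₃.ne', Gamma_add_one hz₀.ne', log_mul hz₃.ne' (Gamma_pos_of_pos hz₃).ne',
    log_mul hz₀.ne' (Gamma_pos_of_pos hz₀).ne']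
  have : 1 / (3 * z) - 1 / (3 * (z + 1)) = 1 / (3 * z * (z + 1)) := by field_simp; ring
  linarith

theorem gammaThirdDefect_nonpos (hz : 1 ≤ z) : gammaThirdDefect z ≤ 0 :=
  le_of_tendsto_of_le_add_one (fun _ => gammaThirdDefect_le_add_one) tendsto_gammaThirdDefect hz

theorem Gamma_add_third_pow_le (hz : 1 ≤ z) :
    Gamma (z + 1 / 3) ^ 3 ≤ z * rexp (-(1 / (3 * z))) * Gamma z ^ 3 := by
  have hz₀ : 0 < z := by linarith
  have hΓ := Gamma_pos_of_pos hz₀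
  have hΓ₃ := Gamma_pos_of_pos (by linarith : 0 < z + 1 / 3)
  rw [← log_le_log_iff (by positivity) (by positivity), log_mul (by positivity) (by positivity),
    log_mul hz₀.ne' (exp_pos _).ne', log_exp, log_pow, log_pow]
  have := gammaThirdDefect_nonpos hz
  rw [gammaThirdDefect] at this
  push_cast
  linarith

end GammaRatio

theorem pow_three_mul_exp_lt {x : ℝ} (hx : 0 < x) :
    x ^ 3 * (x + 1) * rexp (-(1 / (3 * (x + 1))))
      < (x - 1 / 3 + 1 / (18 * x)) * (x + 1 / 3) ^ 3 := by
  set u := 1 / (3 * (x + 1)) with hu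
  have hexp : (1 + u + u ^ 2 / 2) * rexp (-u) ≤ 1 := by
    rw [exp_neg, ← div_eq_mul_inv, div_le_one (exp_pos u)]
    exact quadratic_le_exp_of_nonneg (by positivity)
  have hB : 0 < x - 1 / 3 + 1 / (18 * x) := by
    rw [show x - 1 / 3 + 1 / (18 * x) = (18 * (x - 1 / 6) ^ 2 + 1 / 2) / (18 * x) by
      field_simp; ring]
    positivity
  have hpoly :
      x ^ 3 * (x + 1) < (x - 1 / 3 + 1 / (18 * x)) * (x + 1 / 3) ^ 3 * (1 + u + u ^ 2 / 2) := by
    rw [← sub_pos, show (x - 1 / 3 + 1 / (18 * x)) * (x + 1 / 3) ^ 3 * (1 + u + u ^ 2 / 2)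
        - x ^ 3 * (x + 1) = (324 * x ^ 4 + 351 * x ^ 3 - 81 * x ^ 2 + 117 * x + 25)
          / (8748 * x * (x + 1) ^ 2) by rw [hu]; field_simp; ring]
    apply div_pos _ (by positivity)
    nlinarith [sq_nonneg (x - 1 / 8), pow_pos hx 3, pow_pos hx 4]
  calc x ^ 3 * (x + 1) * rexp (-u)
      < (x - 1 / 3 + 1 / (18 * x)) * (x + 1 / 3) ^ 3 * ((1 + u + u ^ 2 / 2) * rexp (-u)) := by
        rw [← mul_assoc]; exact mul_lt_mul_of_pos_right hpoly (exp_pos _)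
    _ ≤ (x - 1 / 3 + 1 / (18 * x)) * (x + 1 / 3) ^ 3 :=
        mul_le_of_le_one_right (by positivity) hexp

theorem Gamma_add_third_pow_lt {x : ℝ} (hx : 0 < x) :
    Gamma (x + 1 / 3) ^ 3 < (x - 1 / 3 + 1 / (18 * x)) * Gamma x ^ 3 := by
  have hx₃ : 0 < x + 1 / 3 := by linarith
  have h := Gamma_add_third_pow_le (z := x + 1) (by linarith)
  rw [show x + 1 + 1 / 3 = x + 1 / 3 + 1 by ring, Gamma_add_one hx₃.ne', Gamma_add_one hx.ne']
    at h
  have hΓ := Gamma_pos_of_pos hx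
  refine lt_of_mul_lt_mul_left ?_ (pow_pos hx₃ 3).le
  calc (x + 1 / 3) ^ 3 * Gamma (x + 1 / 3) ^ 3
      ≤ x ^ 3 * (x + 1) * rexp (-(1 / (3 * (x + 1)))) * Gamma x ^ 3 := by
        linear_combination h
    _ < (x - 1 / 3 + 1 / (18 * x)) * (x + 1 / 3) ^ 3 * Gamma x ^ 3 :=
        mul_lt_mul_of_pos_right (pow_three_mul_exp_lt hx) (by positivity)
    _ = (x + 1 / 3) ^ 3 * ((x - 1 / 3 + 1 / (18 * x)) * Gamma x ^ 3) := by ring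

/-- For every `x > 0` the median of the gamma distribution with
parameter `x` satisfies `m(x) < x − 1/3 + 1/(18x)`. -/
theorem gammaMedian_upper_bound (m : ℝ → ℝ)
    (hm : ∀ x > (0:ℝ), 0 < m x ∧
      (∫ t in Set.Ioc (0:ℝ) (m x), Real.exp (-t) * t ^ (x - 1)) =
        (1/2) * ∫ t in Set.Ioi (0:ℝ), Real.exp (-t) * t ^ (x - 1)) :
    ∀ x > (0:ℝ), m x < x - 1/3 + 1/(18*x) := by
  intro x hx
  obtain ⟨hm_pos, hm_median⟩ := hm x hx
  set μ := m x ^ (1 / 3 : ℝ)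
  have hμ : 0 < μ := by positivity
  have hμ_cube : μ ^ 3 = m x := by
    rw [← rpow_natCast, ← rpow_mul hm_pos.le]
    norm_num
  have hmedian :
      ∫ y in 0..μ, cbrtGammaDensity x y = (∫ y in Ioi 0, cbrtGammaDensity x y) / 2 := by
    rw [intervalIntegral_cbrtGammaDensity, hμ_cube, intervalIntegral.integral_of_le hm_pos.le,
      hm_median, integral_cbrtGammaDensity_eq]
    ring
  have hmean : μ * Gamma x ≤ Gamma (x + 1 / 3) := by
    simpa only [integral_cbrtGammaDensity hx, integral_mul_cbrtGammaDensity hx] using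
      mul_integral_Ioi_le_integral_Ioi_mul_of_median hμ (integrableOn_cbrtGammaDensity hx)
        (integrableOn_mul_cbrtGammaDensity hx) (fun y hy => (cbrtGammaDensity_pos hy).le) hmedian
        (singleCrossingOn_cbrtGammaDensity_sub x μ)
  have hΓ := Gamma_pos_of_pos hx
  refine lt_of_mul_lt_mul_right ?_ (pow_pos hΓ 3).le
  calc m x * Gamma x ^ 3 = (μ * Gamma x) ^ 3 := by rw [← hμ_cube]; ring
    _ ≤ Gamma (x + 1 / 3) ^ 3 := pow_le_pow_left₀ (by positivity) hmean 3
    _ < (x - 1 / 3 + 1 / (18 * x)) * Gamma x ^ 3 := Gamma_add_third_pow_lt hx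
end

section
/- For every x > 0 one has 2·∫_0^{φ(x)} e^{−x(e^{−u}+u)} du = ∫_1^∞ ξ(t)·e^{−xt} dt. -/
open MeasureTheory Set Real

/-!
Write `E(s) = exp (-x (e^{-s} + s))`. The substitution `t = x e^{-s}` turns `x^x E(s) ds` into the
gamma density `e^{-t} t^{x-1} dt`, so `E` is integrable on `ℝ` and `φ(x)` is a median of `E`:
`2 ∫_{φ}^∞ E = ∫ E`. Hence `2 ∫_0^φ E = ∫_0^∞ E - ∫_{-∞}^0 E`.
On the other side, `t = e^{-s} + s` is a change of variables from each half line onto `(1, ∞)`,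
with inverse `w = v` resp. `w = u`, and turns `e^{-xt} dt / |1 - e^{-w(t)}|` into `E(s) ds`. Since
`1 - e^{-v} > 0 > 1 - e^{-u}`, the two summands of `ξ` give exactly `∫_0^∞ E - ∫_{-∞}^0 E`.
-/

lemma hasDerivAt_exp_neg_add_self (s : ℝ) :
    HasDerivAt (fun s => exp (-s) + s) (1 - exp (-s)) s :=
  ((hasDerivAt_neg s).exp.add (hasDerivAt_id' s)).congr_deriv (by ring)

lemma one_lt_exp_neg_add_self {s : ℝ} (hs : s ≠ 0) : 1 < exp (-s) + s := by
  linarith [add_one_lt_exp (neg_ne_zero.mpr hs)]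

lemma ne_zero_of_exp_neg_add_self_eq {s t : ℝ} (ht : 1 < t) (h : exp (-s) + s = t) : s ≠ 0 := by
  rintro rfl
  simp only [neg_zero, exp_zero, add_zero] at h
  exact ht.ne h

lemma strictMonoOn_exp_neg_add_self : StrictMonoOn (fun s => exp (-s) + s) (Ici 0) := by
  refine strictMonoOn_of_deriv_pos (convex_Ici 0) (by fun_prop) fun s hs => ?_
  rw [interior_Ici, mem_Ioi] at hs
  rw [(hasDerivAt_exp_neg_add_self s).deriv, sub_pos, exp_lt_one_iff, neg_lt_zero]
  exact hs

lemma strictAntiOn_exp_neg_add_self : StrictAntiOn (fun s => exp (-s) + s) (Iic 0) := by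
  refine strictAntiOn_of_deriv_neg (convex_Iic 0) (by fun_prop) fun s hs => ?_
  rw [interior_Iic, mem_Iio] at hs
  rw [(hasDerivAt_exp_neg_add_self s).deriv, sub_neg, one_lt_exp_iff, neg_pos]
  exact hs

section Substitution

variable {S : Set ℝ} {w : ℝ → ℝ}

lemma image_exp_neg_add_self_eq_Ioi_one (h0 : 0 ∉ S)
    (hw : ∀ t > 1, w t ∈ S ∧ exp (-w t) + w t = t) :
    (fun s => exp (-s) + s) '' S = Ioi 1 := by
  refine Subset.antisymm ?_ fun t ht => ⟨w t, hw t ht⟩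
  rintro _ ⟨s, hs, rfl⟩
  exact one_lt_exp_neg_add_self (ne_of_mem_of_not_mem hs h0)

lemma leftInvOn_exp_neg_add_self (h0 : 0 ∉ S) (hinj : InjOn (fun s => exp (-s) + s) S)
    (hw : ∀ t > 1, w t ∈ S ∧ exp (-w t) + w t = t) :
    LeftInvOn w (fun s => exp (-s) + s) S := by
  intro a ha
  obtain ⟨hwa, hfwa⟩ := hw _ (one_lt_exp_neg_add_self (ne_of_mem_of_not_mem ha h0))
  exact hinj hwa ha hfwa

lemma abs_deriv_smul_div_abs_eq (h0 : 0 ∉ S) (hinj : InjOn (fun s => exp (-s) + s) S)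
    (hw : ∀ t > 1, w t ∈ S ∧ exp (-w t) + w t = t) (g : ℝ → ℝ) {s : ℝ} (hs : s ∈ S) :
    |1 - exp (-s)| • (g (exp (-s) + s) / |1 - exp (-w (exp (-s) + s))|) = g (exp (-s) + s) := by
  have hne : |1 - exp (-s)| ≠ 0 := by
    rw [abs_ne_zero, sub_ne_zero, ne_comm, Ne, exp_eq_one_iff, neg_eq_zero]
    exact ne_of_mem_of_not_mem hs h0
  rw [leftInvOn_exp_neg_add_self h0 hinj hw hs, smul_eq_mul]
  field_simp

lemma integrableOn_Ioi_one_div_abs_iff (hS : MeasurableSet S) (h0 : 0 ∉ S)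
    (hinj : InjOn (fun s => exp (-s) + s) S) (hw : ∀ t > 1, w t ∈ S ∧ exp (-w t) + w t = t)
    (g : ℝ → ℝ) :
    IntegrableOn (fun t => g t / |1 - exp (-w t)|) (Ioi 1) ↔
      IntegrableOn (fun s => g (exp (-s) + s)) S := by
  rw [← image_exp_neg_add_self_eq_Ioi_one h0 hw, integrableOn_image_iff_integrableOn_abs_deriv_smul
    hS (fun s _ => (hasDerivAt_exp_neg_add_self s).hasDerivWithinAt) hinj]
  exact integrableOn_congr_fun (fun s hs => abs_deriv_smul_div_abs_eq h0 hinj hw g hs) hS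

lemma integral_Ioi_one_div_abs (hS : MeasurableSet S) (h0 : 0 ∉ S)
    (hinj : InjOn (fun s => exp (-s) + s) S) (hw : ∀ t > 1, w t ∈ S ∧ exp (-w t) + w t = t)
    (g : ℝ → ℝ) :
    ∫ t in Ioi 1, g t / |1 - exp (-w t)| = ∫ s in S, g (exp (-s) + s) := by
  rw [← image_exp_neg_add_self_eq_Ioi_one h0 hw, integral_image_eq_integral_abs_deriv_smul
    hS (fun s _ => (hasDerivAt_exp_neg_add_self s).hasDerivWithinAt) hinj]
  exact setIntegral_congr_fun hS fun s hs => abs_deriv_smul_div_abs_eq h0 hinj hw g hs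

end Substitution

lemma integral_Ioi_one_mul_eq_sub {u v ξ g : ℝ → ℝ}
    (hu : ∀ t ≥ 1, u t ≤ 0 ∧ exp (-(u t)) + u t = t)
    (hv : ∀ t ≥ 1, 0 ≤ v t ∧ exp (-(v t)) + v t = t)
    (hξ : ∀ t > 1, ξ t = 1 / (1 - exp (-(v t))) + 1 / (1 - exp (-(u t))))
    (hg : Integrable (fun s => g (exp (-s) + s))) :
    ∫ t in Ioi 1, ξ t * g t =
      (∫ s in Ioi 0, g (exp (-s) + s)) - ∫ s in Iio 0, g (exp (-s) + s) := by
  have hv' : ∀ t > 1, v t ∈ Ioi 0 ∧ exp (-v t) + v t = t := fun t ht =>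
    ⟨(hv t ht.le).1.lt_of_ne' (ne_zero_of_exp_neg_add_self_eq ht (hv t ht.le).2), (hv t ht.le).2⟩
  have hu' : ∀ t > 1, u t ∈ Iio 0 ∧ exp (-u t) + u t = t := fun t ht =>
    ⟨(hu t ht.le).1.lt_of_ne (ne_zero_of_exp_neg_add_self_eq ht (hu t ht.le).2), (hu t ht.le).2⟩
  have hinjv := strictMonoOn_exp_neg_add_self.injOn.mono Ioi_subset_Ici_self
  have hinju := strictAntiOn_exp_neg_add_self.injOn.mono Iio_subset_Iic_self
  have h0v : (0 : ℝ) ∉ Ioi 0 := lt_irrefl (0 : ℝ)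
  have h0u : (0 : ℝ) ∉ Iio 0 := lt_irrefl (0 : ℝ)
  have hξg : ∀ t ∈ Ioi (1 : ℝ),
      ξ t * g t = g t / |1 - exp (-v t)| - g t / |1 - exp (-u t)| := by
    intro t ht
    have hvt : 0 < 1 - exp (-v t) := by
      rw [sub_pos, exp_lt_one_iff, neg_lt_zero]; exact (hv' t ht).1
    have hut : 1 - exp (-u t) < 0 := by
      rw [sub_neg, one_lt_exp_iff, neg_pos]; exact (hu' t ht).1
    rw [hξ t ht, abs_of_pos hvt, abs_of_neg hut, div_neg]
    ring
  rw [setIntegral_congr_fun measurableSet_Ioi hξg, integral_sub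
    ((integrableOn_Ioi_one_div_abs_iff measurableSet_Ioi h0v hinjv hv' g).2 hg.integrableOn)
    ((integrableOn_Ioi_one_div_abs_iff measurableSet_Iio h0u hinju hu' g).2 hg.integrableOn),
    integral_Ioi_one_div_abs measurableSet_Ioi h0v hinjv hv' g,
    integral_Ioi_one_div_abs measurableSet_Iio h0u hinju hu' g]

section GammaSubstitution

variable {x : ℝ}

lemma hasDerivAt_mul_exp_neg (x s : ℝ) :
    HasDerivAt (fun s => x * exp (-s)) (-(x * exp (-s))) s :=
  ((hasDerivAt_neg s).exp.const_mul x).congr_deriv (by ring)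

lemma strictAnti_mul_exp_neg (hx : 0 < x) : StrictAnti fun s => x * exp (-s) :=
  fun _ _ h => mul_lt_mul_of_pos_left (exp_lt_exp.2 (neg_lt_neg h)) hx

lemma image_mul_exp_neg_Ioi (hx : 0 < x) (a : ℝ) :
    (fun s => x * exp (-s)) '' Ioi a = Ioo 0 (x * exp (-a)) := by
  have : (fun s => x * exp (-s)) = (x * ·) ∘ exp ∘ Neg.neg := rfl
  rw [this, image_comp, image_comp, image_neg_Ioi, image_exp_Iio, image_mul_left_Ioo hx, mul_zero]

lemma image_mul_exp_neg_univ (hx : 0 < x) : (fun s => x * exp (-s)) '' univ = Ioi 0 := by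
  have : (fun s => x * exp (-s)) = (x * ·) ∘ exp ∘ Neg.neg := rfl
  rw [this, image_comp, image_comp, image_univ_of_surjective neg_surjective, image_univ, range_exp,
    image_mul_left_Ioi hx, mul_zero]

lemma abs_deriv_smul_gammaIntegrand_mul_exp_neg (hx : 0 < x) (s : ℝ) :
    |-(x * exp (-s))| • (exp (-(x * exp (-s))) * (x * exp (-s)) ^ (x - 1)) =
      x ^ x * exp (-x * (exp (-s) + s)) := by
  have hpos : 0 < x * exp (-s) := by positivity
  rw [abs_neg, abs_of_pos hpos, smul_eq_mul, rpow_sub_one hpos.ne', mul_rpow hx.le (exp_pos _).le,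
    ← exp_mul]
  field_simp
  rw [← exp_add]
  ring_nf

lemma integrableOn_gammaIntegrand_image_mul_exp_neg_iff (hx : 0 < x) {S : Set ℝ}
    (hS : MeasurableSet S) :
    IntegrableOn (fun t => exp (-t) * t ^ (x - 1)) ((fun s => x * exp (-s)) '' S) ↔
      IntegrableOn (fun s => exp (-x * (exp (-s) + s))) S := by
  rw [integrableOn_image_iff_integrableOn_abs_deriv_smul hS
    (fun s _ => (hasDerivAt_mul_exp_neg x s).hasDerivWithinAt)
    (strictAnti_mul_exp_neg hx).injective.injOn]
  exact (integrableOn_congr_fun (fun s _ => abs_deriv_smul_gammaIntegrand_mul_exp_neg hx s)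
    hS).trans (integrable_const_mul_iff (rpow_pos_of_pos hx x).ne'.isUnit _)

lemma integral_gammaIntegrand_image_mul_exp_neg (hx : 0 < x) {S : Set ℝ} (hS : MeasurableSet S) :
    ∫ t in (fun s => x * exp (-s)) '' S, exp (-t) * t ^ (x - 1) =
      x ^ x * ∫ s in S, exp (-x * (exp (-s) + s)) := by
  rw [integral_image_eq_integral_abs_deriv_smul hS
    (fun s _ => (hasDerivAt_mul_exp_neg x s).hasDerivWithinAt)
    (strictAnti_mul_exp_neg hx).injective.injOn, ← integral_const_mul]
  exact setIntegral_congr_fun hS fun s _ => abs_deriv_smul_gammaIntegrand_mul_exp_neg hx s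

lemma integrable_exp_neg_mul_exp_neg_add_self (hx : 0 < x) :
    Integrable fun s => exp (-x * (exp (-s) + s)) := by
  rw [← integrableOn_univ,
    ← integrableOn_gammaIntegrand_image_mul_exp_neg_iff hx MeasurableSet.univ,
    image_mul_exp_neg_univ hx]
  exact GammaIntegral_convergent hx

lemma two_mul_integral_Ioi_log_div_median {m : ℝ} (hx : 0 < x) (hm : 0 < m)
    (hmed : ∫ t in Ioc 0 m, exp (-t) * t ^ (x - 1) = 1 / 2 * ∫ t in Ioi 0, exp (-t) * t ^ (x - 1)) :
    2 * ∫ s in Ioi (log (x / m)), exp (-x * (exp (-s) + s)) = ∫ s, exp (-x * (exp (-s) + s)) := by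
  have hxm : x * exp (-log (x / m)) = m := by
    rw [exp_neg, exp_log (div_pos hx hm)]
    field_simp
  have hIoi := integral_gammaIntegrand_image_mul_exp_neg hx (measurableSet_Ioi (a := log (x / m)))
  have huniv := integral_gammaIntegrand_image_mul_exp_neg hx MeasurableSet.univ
  rw [image_mul_exp_neg_Ioi hx, hxm, ← integral_Ioc_eq_integral_Ioo] at hIoi
  rw [image_mul_exp_neg_univ hx, setIntegral_univ] at huniv
  apply mul_left_cancel₀ (rpow_pos_of_pos hx x).ne'
  linear_combination 2 * hmed - 2 * hIoi + huniv

end GammaSubstitution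

/-- `2·∫_0^{φ(x)} e^{−x(e^{−u}+u)} du = ∫_1^∞ ξ(t)·e^{−xt} dt` for every
`x > 0`.  Here `m` is the median of the gamma distribution, `φ(x) = log (x / m x)`,
`u t ≤ 0 ≤ v t` are the two solutions of `e^{-s} + s = t` for `t ≥ 1`, and
`ξ(t) = 1/(1 − e^{-v t}) + 1/(1 − e^{-u t})` for `t > 1`. -/
theorem gammaMedian_key_identity (m u v ξ : ℝ → ℝ)
    (hm : ∀ x > (0:ℝ), 0 < m x ∧
      (∫ t in Set.Ioc (0:ℝ) (m x), Real.exp (-t) * t ^ (x - 1)) =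
        (1/2) * ∫ t in Set.Ioi (0:ℝ), Real.exp (-t) * t ^ (x - 1))
    (hu : ∀ t ≥ (1:ℝ), u t ≤ 0 ∧ Real.exp (-(u t)) + u t = t)
    (hv : ∀ t ≥ (1:ℝ), 0 ≤ v t ∧ Real.exp (-(v t)) + v t = t)
    (hξ : ∀ t > (1:ℝ),
      ξ t = 1/(1 - Real.exp (-(v t))) + 1/(1 - Real.exp (-(u t)))) :
    ∀ x > (0:ℝ),
      2 * (∫ s in (0:ℝ)..(Real.log (x / m x)), Real.exp (-x * (Real.exp (-s) + s))) =
        ∫ t in Set.Ioi (1:ℝ), ξ t * Real.exp (-x * t) := by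
  intro x hx
  obtain ⟨hm0, hmed⟩ := hm x hx
  have hE := integrable_exp_neg_mul_exp_neg_add_self hx
  have hmedian := two_mul_integral_Ioi_log_div_median hx hm0 hmed
  have hsplit := intervalIntegral.integral_Iic_add_Ioi (b := 0) hE.integrableOn hE.integrableOn
  rw [integral_Iic_eq_integral_Iio] at hsplit
  rw [integral_Ioi_one_mul_eq_sub (g := fun t => exp (-x * t)) hu hv hξ hE,
    ← intervalIntegral.integral_Ioi_sub_Ioi' hE.integrableOn hE.integrableOn]
  linarith
end

section
/- The functions t ↦ v(1+t) and t ↦ −u(1+t) are Bernstein functions on (0,∞): both are nonnegative and all of their derivatives alternate in sign, i.e. (−1)^p · (d^p/dt^p) v(1+t) ≤ 0 and (−1)^p · (d^p/dt^p)(−u(1+t)) ≤ 0 for every integer p ≥ 1 and every t > 0. Moreover lim_{t→∞} v(t)/t = 1 and lim_{t→∞} u(t)/t = 0. -/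
open MeasureTheory Filter Set Polynomial Topology

noncomputable section UVBernsteinAux

private def feUV : ℝ → ℝ := fun s => Real.exp (-s) + s

private lemma feUV_hasDerivAt (s : ℝ) : HasDerivAt feUV (1 - Real.exp (-s)) s := by
  have h1 : HasDerivAt (fun s : ℝ => Real.exp (-s)) (-Real.exp (-s)) s := by
    exact ((Real.hasDerivAt_exp (-s)).comp s (hasDerivAt_neg s)).congr_deriv (by ring)
  have h2 : HasDerivAt (fun x : ℝ => Real.exp (-x) + x) (-Real.exp (-s) + 1) s :=
    h1.add (hasDerivAt_id s)
  have h3 : (1:ℝ) - Real.exp (-s) = -Real.exp (-s) + 1 := by ring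
  rw [h3]; exact h2

private lemma feUV_contDiff : ContDiff ℝ (⊤ : WithTop ℕ∞) feUV :=
  (Real.contDiff_exp.comp contDiff_neg).add contDiff_id

private lemma feUV_mono : StrictMonoOn feUV (Set.Ici 0) := by
  have : ∀ s ∈ interior (Set.Ici (0:ℝ)), 0 < deriv feUV s := by
    intro s hs
    rw [interior_Ici] at hs
    rw [(feUV_hasDerivAt s).deriv]
    have : Real.exp (-s) < 1 := by
      rw [Real.exp_lt_one_iff]; simpa using hs
    linarith
  exact strictMonoOn_of_deriv_pos (convex_Ici 0) (feUV_contDiff.continuous.continuousOn) this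

private lemma feUV_anti : StrictAntiOn feUV (Set.Iic 0) := by
  have : ∀ s ∈ interior (Set.Iic (0:ℝ)), deriv feUV s < 0 := by
    intro s hs
    rw [interior_Iic] at hs
    rw [(feUV_hasDerivAt s).deriv]
    have : 1 < Real.exp (-s) := by
      rw [show (1:ℝ) = Real.exp 0 by simp]
      exact Real.exp_lt_exp.2 (by simpa using hs)
    linarith
  exact strictAntiOn_of_deriv_neg (convex_Iic 0) (feUV_contDiff.continuous.continuousOn) this

private lemma keyUV (w : ℝ → ℝ) (S : Set ℝ) (hSopen : IsOpen S) (hSinj : Set.InjOn feUV S)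
    (hS0 : (0:ℝ) ∉ S) (hw : ∀ t ≥ (1:ℝ), Real.exp (-(w t)) + w t = t)
    (hmem : ∀ t > (1:ℝ), w t ∈ S) {t : ℝ} (ht : 1 < t) :
    ContDiffAt ℝ (⊤ : WithTop ℕ∞) w t ∧ HasDerivAt w (1 - Real.exp (-(w t)))⁻¹ t := by
  set a := w t with ha_def
  have ha : a ∈ S := hmem t ht
  have ha0 : a ≠ 0 := fun h => hS0 (h ▸ ha)
  have hd : 1 - Real.exp (-a) ≠ 0 := by
    intro h
    have h1 : Real.exp (-a) = 1 := by linarith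
    exact ha0 (by simpa using (Real.exp_eq_one_iff (-a)).1 h1)
  have hfea : feUV a = t := hw t ht.le
  have hcd : ContDiffAt ℝ (⊤ : WithTop ℕ∞) feUV a := feUV_contDiff.contDiffAt
  have hfd : HasFDerivAt feUV
      ((ContinuousLinearEquiv.unitsEquivAut ℝ (Units.mk0 _ hd)) : ℝ →L[ℝ] ℝ) a :=
    (feUV_hasDerivAt a).hasFDerivAt_equiv hd
  have hli_cd : ContDiffAt ℝ (⊤ : WithTop ℕ∞) (hcd.localInverse hfd (by simp)) t := by
    have := hcd.to_localInverse (f' := ContinuousLinearEquiv.unitsEquivAut ℝ (Units.mk0 _ hd))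
      hfd (by simp)
    rwa [hfea] at this
  have hsf : HasStrictFDerivAt feUV
      ((ContinuousLinearEquiv.unitsEquivAut ℝ (Units.mk0 _ hd)) : ℝ →L[ℝ] ℝ) a :=
    hcd.hasStrictFDerivAt' hfd (by simp)
  have hli_def : hcd.localInverse hfd (by simp) = hsf.localInverse feUV _ a := rfl
  -- eventual equality of w and the local inverse
  have hgt : ∀ᶠ y in 𝓝 t, (1:ℝ) < y := eventually_gt_nhds ht
  have h_ri : ∀ᶠ y in 𝓝 t, feUV ((hcd.localInverse hfd (by simp)) y) = y := by
    rw [hli_def, ← hfea]; exact hsf.eventually_right_inverse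
  have h_cont : ContinuousAt (hcd.localInverse hfd (by simp)) t := by
    rw [hli_def, ← hfea]; exact hsf.localInverse_continuousAt
  have h_val : (hcd.localInverse hfd (by simp)) t = a := by
    rw [hli_def, ← hfea]; exact hsf.localInverse_apply_image
  have h_memS : ∀ᶠ y in 𝓝 t, (hcd.localInverse hfd (by simp)) y ∈ S := by
    apply h_cont.eventually_mem
    rw [h_val]; exact hSopen.mem_nhds ha
  have hev : (hcd.localInverse hfd (by simp)) =ᶠ[𝓝 t] w := by
    filter_upwards [hgt, h_ri, h_memS] with y hy1 hy2 hy3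
    exact hSinj hy3 (hmem y hy1)
      (hy2.trans (show feUV (w y) = y from hw y hy1.le).symm)
  have hw_cd : ContDiffAt ℝ (⊤ : WithTop ℕ∞) w t := hli_cd.congr_of_eventuallyEq hev.symm
  refine ⟨hw_cd, ?_⟩
  exact HasDerivAt.of_local_left_inverse (hw_cd.continuousAt)
    (feUV_hasDerivAt a) hd (by filter_upwards [hgt] with y hy using hw y hy.le)

private def TB : ℕ → Polynomial ℝ
  | 0 => 1
  | (q+1) => X * ((1 - X) * derivative (TB q) + C (2*(q:ℝ)+1) * TB q)

private lemma TB_coeff : ∀ q n, 0 ≤ (TB q).coeff n ∧ (q < n → (TB q).coeff n = 0) := by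
  intro q
  induction q with
  | zero =>
    intro n
    rcases n with _ | m
    · simp [TB]
    · simp [TB, coeff_one]
  | succ q ih =>
    -- coefficient formula for TB (q+1)
    have hA : ∀ m : ℕ, (TB (q+1)).coeff (m+1)
        = (TB q).coeff (m+1) * (m+1) - (TB q).coeff m * m + (2*(q:ℝ)+1) * (TB q).coeff m := by
      intro m
      rw [show TB (q+1) = X * ((1 - X) * derivative (TB q) + C (2*(q:ℝ)+1) * TB q) from rfl]
      rw [coeff_X_mul, coeff_add, coeff_C_mul, sub_mul, one_mul, coeff_sub, coeff_derivative]
      rcases m with _ | k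
      · simp [coeff_X_mul]
      · rw [coeff_X_mul, coeff_derivative]
        push_cast
        ring
    intro n
    rcases n with _ | m
    · constructor
      · rw [show TB (q+1) = X * ((1 - X) * derivative (TB q) + C (2*(q:ℝ)+1) * TB q) from rfl]
        simp
      · intro _
        rw [show TB (q+1) = X * ((1 - X) * derivative (TB q) + C (2*(q:ℝ)+1) * TB q) from rfl]
        simp
    · rw [hA m]
      constructor
      · by_cases hm : q < m
        · rw [(ih m).2 hm, (ih (m+1)).2 (by omega)]
          simp
        · have h1 := (ih m).1
          have h2 := (ih (m+1)).1
          have hmq : (m : ℝ) ≤ 2*(q:ℝ)+1 := by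
            have : m ≤ q := by omega
            have : (m:ℝ) ≤ q := by exact_mod_cast this
            linarith
          nlinarith [h1, h2]
      · intro hlt
        rw [(ih m).2 (by omega), (ih (m+1)).2 (by omega)]
        simp

private lemma TB_eval_nonneg (q : ℕ) {x : ℝ} (hx : 0 ≤ x) : 0 ≤ (TB q).eval x := by
  rw [Polynomial.eval_eq_sum_range]
  exact Finset.sum_nonneg fun i _ => mul_nonneg (TB_coeff q i).1 (pow_nonneg hx i)
private lemma iterUV (w : ℝ → ℝ)
    (hne : ∀ t > (1:ℝ), 1 - Real.exp (-(w t)) ≠ 0)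
    (hder : ∀ t > (1:ℝ), HasDerivAt w (1 - Real.exp (-(w t)))⁻¹ t) :
    ∀ q : ℕ, ∀ t > (0:ℝ), iteratedDeriv (q+1) (fun s => w (1 + s)) t
      = (-1:ℝ)^q * ((TB q).eval (Real.exp (-(w (1+t))))
          / (1 - Real.exp (-(w (1+t))))^(2*q+1)) := by
  -- preliminary facts at any t > 0
  have hyt : ∀ t : ℝ, 0 < t → 1 < 1 + t := fun t ht => by linarith
  have hWin : ∀ t : ℝ, 0 < t →
      HasDerivAt (fun s => w (1+s)) ((1 - Real.exp (-(w (1+t))))⁻¹) t := by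
    intro t ht
    have h := (hder (1+t) (hyt t ht)).comp t ((hasDerivAt_id t).const_add 1)
    exact h.congr_deriv (by simp)
  have hX : ∀ t : ℝ, 0 < t →
      HasDerivAt (fun s => Real.exp (-(w (1+s))))
        (-(Real.exp (-(w (1+t)))) * (1 - Real.exp (-(w (1+t))))⁻¹) t := by
    intro t ht
    have h := (Real.hasDerivAt_exp (-(w (1+t)))).comp t (hWin t ht).neg
    exact h.congr_deriv (by ring)
  intro q
  induction q with
  | zero =>
    intro t ht
    rw [iteratedDeriv_one, (hWin t ht).deriv]
    simp [TB, pow_one, one_div]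
  | succ q ih =>
    intro t ht
    set y := Real.exp (-(w (1+t))) with hy
    have hc : 1 - y ≠ 0 := hne (1+t) (hyt t ht)
    rw [iteratedDeriv_succ]
    have hEq : deriv (iteratedDeriv (q+1) (fun s => w (1+s))) t
        = deriv (fun s => (-1:ℝ)^q * ((TB q).eval (Real.exp (-(w (1+s))))
            / (1 - Real.exp (-(w (1+s))))^(2*q+1))) t := by
      apply Filter.EventuallyEq.deriv_eq
      filter_upwards [Ioi_mem_nhds ht] with s hs
      exact ih s hs
    rw [hEq]
    have hN : HasDerivAt (fun s => (TB q).eval (Real.exp (-(w (1+s)))))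
        ((derivative (TB q)).eval y * (-y * (1 - y)⁻¹)) t :=
      by have := (Polynomial.hasDerivAt (TB q) y).comp t (hX t ht); exact this
    have hD : HasDerivAt (fun s => (1 - Real.exp (-(w (1+s))))^(2*q+1))
        (((2*q+1 : ℕ) : ℝ) * (1 - y)^(2*q+1-1) * (-(-y * (1 - y)⁻¹))) t :=
      ((hX t ht).const_sub 1).pow (2*q+1)
    have hdiv := hN.div hD (pow_ne_zero _ hc)
    have hfin := hdiv.const_mul ((-1:ℝ)^q)
    rw [show deriv (fun s => (-1:ℝ)^q * ((TB q).eval (Real.exp (-(w (1+s))))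
        / (1 - Real.exp (-(w (1+s))))^(2*q+1))) t = _ from hfin.deriv]
    -- now the algebraic identity
    have hq1 : 2*q+1-1 = 2*q := by omega
    rw [hq1]
    have hzne : (1 - y)^(2*q) ≠ 0 := pow_ne_zero _ hc
    have hz1 : (1-y)^(2*q+1) = (1 - y)^(2*q) * (1-y) := pow_succ _ _
    have hz3 : (1-y)^(2*(q+1)+1) = (1 - y)^(2*q) * (1-y)^3 := by
      rw [show 2*(q+1)+1 = 2*q+3 from by omega, pow_add]
    have hTB : (TB (q+1)).eval y
        = y * ((1 - y) * (derivative (TB q)).eval y + (2*(q:ℝ)+1) * (TB q).eval y) := by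
      rw [show TB (q+1) = Polynomial.X * ((1 - Polynomial.X) * derivative (TB q)
          + Polynomial.C (2*(q:ℝ)+1) * TB q) from rfl]
      simp [Polynomial.eval_mul, Polynomial.eval_add, Polynomial.eval_sub]
    rw [hTB, hz1, hz3]
    push_cast
    field_simp
    ring

private lemma branchUV (w : ℝ → ℝ) (S : Set ℝ) (hSopen : IsOpen S) (hSinj : Set.InjOn feUV S)
    (hS0 : (0:ℝ) ∉ S) (hw : ∀ t ≥ (1:ℝ), Real.exp (-(w t)) + w t = t)
    (hmem : ∀ t > (1:ℝ), w t ∈ S)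
    (hne : ∀ t > (1:ℝ), 1 - Real.exp (-(w t)) ≠ 0) :
    ContDiffOn ℝ (⊤ : WithTop ℕ∞) (fun t => w (1 + t)) (Set.Ioi 0) ∧
    (∀ q : ℕ, ∀ t > (0:ℝ), iteratedDeriv (q+1) (fun s => w (1 + s)) t
      = (-1:ℝ)^q * ((TB q).eval (Real.exp (-(w (1+t))))
          / (1 - Real.exp (-(w (1+t))))^(2*q+1))) := by
  have hkey := fun t (ht : 1 < t) => keyUV w S hSopen hSinj hS0 hw hmem ht
  constructor
  · intro t ht
    have h1 : (1:ℝ) < 1 + t := by simpa using (mem_Ioi.1 ht)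
    have h2 : ContDiffAt ℝ (⊤ : WithTop ℕ∞) (fun s : ℝ => w (1 + s)) t :=
      ContDiffAt.comp t (hkey (1+t) h1).1 ((contDiff_const.add contDiff_id).contDiffAt)
    exact h2.contDiffWithinAt
  · exact iterUV w hne (fun t ht => (hkey t ht).2)

end UVBernsteinAux

/-- The functions `t ↦ v(1+t)` and `t ↦ −u(1+t)` are Bernstein functions
on `(0,∞)`: they are smooth, nonnegative, and their derivatives alternate in sign, i.e.
`(−1)^p (d^p/dt^p) v(1+t) ≤ 0` and `(−1)^p (d^p/dt^p)(−u(1+t)) ≤ 0` for all integers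
`p ≥ 1` and all `t > 0`.  Moreover `v(t)/t → 1` and `u(t)/t → 0` as `t → ∞`.
Here `u t ≤ 0 ≤ v t` are the two solutions of `e^{-s} + s = t` for `t ≥ 1`. -/
theorem u_v_bernstein (u v : ℝ → ℝ)
    (hu : ∀ t ≥ (1:ℝ), u t ≤ 0 ∧ Real.exp (-(u t)) + u t = t)
    (hv : ∀ t ≥ (1:ℝ), 0 ≤ v t ∧ Real.exp (-(v t)) + v t = t) :
    (ContDiffOn ℝ (⊤ : ℕ∞) (fun t => v (1 + t)) (Set.Ioi 0) ∧
      (∀ t > (0:ℝ), 0 ≤ v (1 + t)) ∧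
      ∀ p : ℕ, 1 ≤ p → ∀ t > (0:ℝ),
        (-1 : ℝ) ^ p * iteratedDeriv p (fun s => v (1 + s)) t ≤ 0) ∧
    (ContDiffOn ℝ (⊤ : ℕ∞) (fun t => -u (1 + t)) (Set.Ioi 0) ∧
      (∀ t > (0:ℝ), 0 ≤ -u (1 + t)) ∧
      ∀ p : ℕ, 1 ≤ p → ∀ t > (0:ℝ),
        (-1 : ℝ) ^ p * iteratedDeriv p (fun s => -u (1 + s)) t ≤ 0) ∧
    Tendsto (fun t => v t / t) atTop (nhds 1) ∧
    Tendsto (fun t => u t / t) atTop (nhds 0) := by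
  -- positivity / negativity of the two branches on (1, ∞)
  have hvpos : ∀ t > (1:ℝ), v t ∈ Set.Ioi (0:ℝ) := by
    intro t ht
    rcases (hv t ht.le) with ⟨h0, heq⟩
    rcases lt_or_eq_of_le h0 with h | h
    · exact h
    · exfalso; rw [← h] at heq; simp at heq; linarith
  have huneg : ∀ t > (1:ℝ), u t ∈ Set.Iio (0:ℝ) := by
    intro t ht
    rcases (hu t ht.le) with ⟨h0, heq⟩
    rcases lt_or_eq_of_le h0 with h | h
    · exact h
    · exfalso; rw [h] at heq; simp at heq; linarith
  have hvne : ∀ t > (1:ℝ), 1 - Real.exp (-(v t)) ≠ 0 := by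
    intro t ht
    have h1 : Real.exp (-(v t)) < 1 := by
      rw [show (1:ℝ) = Real.exp 0 by simp]
      exact Real.exp_lt_exp.2 (by simpa using hvpos t ht)
    linarith
  have hune : ∀ t > (1:ℝ), 1 - Real.exp (-(u t)) ≠ 0 := by
    intro t ht
    have h1 : 1 < Real.exp (-(u t)) := by
      rw [show (1:ℝ) = Real.exp 0 by simp]
      exact Real.exp_lt_exp.2 (by simpa using huneg t ht)
    linarith
  have hbv := branchUV v (Set.Ioi 0) isOpen_Ioi (feUV_mono.injOn.mono Set.Ioi_subset_Ici_self)
    (by simp) (fun t ht => (hv t ht).2) hvpos hvne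
  have hbu := branchUV u (Set.Iio 0) isOpen_Iio (feUV_anti.injOn.mono Set.Iio_subset_Iic_self)
    (by simp) (fun t ht => (hu t ht).2) huneg hune
  refine ⟨⟨hbv.1.of_le le_top, ?_, ?_⟩, ⟨?_, ?_, ?_⟩, ?_, ?_⟩
  · -- nonnegativity of v(1+t)
    intro t ht
    exact (hv (1+t) (by linarith)).1
  · -- alternating signs for v
    intro p hp t ht
    obtain ⟨q, rfl⟩ : ∃ q, p = q + 1 := ⟨p - 1, by omega⟩
    rw [hbv.2 q t ht]
    set y := Real.exp (-(v (1+t))) with hy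
    have hy0 : 0 ≤ y := Real.exp_nonneg _
    have hy1 : y < 1 := by
      rw [hy, show (1:ℝ) = Real.exp 0 by simp]
      exact Real.exp_lt_exp.2 (by simpa using hvpos (1+t) (by linarith))
    set B := (TB q).eval y / (1 - y)^(2*q+1) with hB
    have hBnn : 0 ≤ B :=
      div_nonneg (TB_eval_nonneg q hy0) (pow_nonneg (by linarith) _)
    have h1 : (-1:ℝ)^(q+1) * ((-1:ℝ)^q * B) = (-1:ℝ)^(q+1+q) * B := by
      rw [pow_add]; ring
    rw [h1, Odd.neg_one_pow ⟨q, by omega⟩]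
    linarith
  · -- smoothness for -u(1+t)
    exact hbu.1.neg.of_le le_top
  · -- nonnegativity of -u(1+t)
    intro t ht
    simpa using (hu (1+t) (by linarith)).1
  · -- alternating signs for -u
    intro p hp t ht
    obtain ⟨q, rfl⟩ : ∃ q, p = q + 1 := ⟨p - 1, by omega⟩
    rw [show (fun s => -u (1+s)) = (fun s => -((fun r => u (1+r)) s)) from rfl,
      iteratedDeriv_fun_neg, hbu.2 q t ht]
    set y := Real.exp (-(u (1+t))) with hy
    have hy1 : 1 < y := by
      rw [hy, show (1:ℝ) = Real.exp 0 by simp]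
      exact Real.exp_lt_exp.2 (by simpa using huneg (1+t) (by linarith))
    set B := (TB q).eval y / (1 - y)^(2*q+1) with hB
    have hBnp : B ≤ 0 := by
      apply div_nonpos_of_nonneg_of_nonpos (TB_eval_nonneg q (by linarith))
      exact (Odd.pow_neg ⟨q, by omega⟩ (by linarith)).le
    have h1 : (-1:ℝ)^(q+1) * -((-1:ℝ)^q * B) = (-1:ℝ)^(q+1+(q+1)) * B := by
      rw [pow_add]; ring
    rw [h1, Even.neg_one_pow ⟨q+1, by omega⟩]
    linarith
  · -- v t / t → 1
    have h3 : Tendsto (fun t : ℝ => Real.exp (-(v t)) / t) atTop (𝓝 0) := by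
      apply squeeze_zero' (g := fun t : ℝ => 1 / t)
      · filter_upwards [eventually_gt_atTop (0:ℝ)] with t ht
        positivity
      · filter_upwards [eventually_ge_atTop (1:ℝ)] with t ht
        have h4 : Real.exp (-(v t)) ≤ 1 := by
          rw [show (1:ℝ) = Real.exp 0 by simp]
          exact Real.exp_le_exp.2 (by linarith [(hv t ht).1])
        have ht0 : (0:ℝ) < t := by linarith
        gcongr
      · simpa [one_div] using tendsto_inv_atTop_zero
    have h5 : Tendsto (fun t : ℝ => 1 - Real.exp (-(v t)) / t) atTop (𝓝 1) := by
      simpa using tendsto_const_nhds.sub h3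
    apply h5.congr'
    filter_upwards [eventually_ge_atTop (1:ℝ)] with t ht
    have h2 := (hv t ht).2
    have ht0 : t ≠ 0 := by intro h; rw [h] at ht; linarith
    field_simp
    linarith
  · -- u t / t → 0
    have hst : ∀ t ≥ (1:ℝ), 0 ≤ -u t ∧ -u t ≤ Real.log (2*t) := by
      intro t ht
      set s := -u t with hs_def
      have hs0 : 0 ≤ s := by simp [hs_def]; linarith [(hu t ht).1]
      have hes : Real.exp s = t + s := by
        have := (hu t ht).2
        simp only [hs_def] at *
        linarith [this]
      have hst' : s ≤ t := by
        have hsplit : Real.exp s = Real.exp (s/2) * Real.exp (s/2) := by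
          rw [← Real.exp_add]; ring_nf
        have he := Real.add_one_le_exp (s/2)
        nlinarith [sq_nonneg (s/2 - 1), Real.exp_pos (s/2)]
      refine ⟨hs0, ?_⟩
      have h0t : (0:ℝ) < t := by linarith
      have : s = Real.log (t + s) := by rw [← hes, Real.log_exp]
      rw [this]
      apply Real.log_le_log (by linarith)
      linarith
    have hlog : Tendsto (fun t : ℝ => Real.log (2*t) / t) atTop (𝓝 0) := by
      have h1 : Tendsto (fun t : ℝ => Real.log t / t) atTop (𝓝 0) :=
        Real.isLittleO_log_id_atTop.tendsto_div_nhds_zero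
      have h2 : Tendsto (fun t : ℝ => Real.log 2 * t⁻¹) atTop (𝓝 0) := by
        simpa using tendsto_inv_atTop_zero.const_mul (Real.log 2)
      have h3 := h2.add h1
      rw [add_zero] at h3
      apply h3.congr'
      filter_upwards [eventually_gt_atTop (0:ℝ)] with t ht
      rw [Real.log_mul (by norm_num) ht.ne']
      field_simp
    have hneg : Tendsto (fun t : ℝ => -u t / t) atTop (𝓝 0) := by
      apply squeeze_zero' (g := fun t : ℝ => Real.log (2*t) / t)
      · filter_upwards [eventually_ge_atTop (1:ℝ)] with t ht
        have := (hst t ht).1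
        have h0t : (0:ℝ) < t := by linarith
        positivity
      · filter_upwards [eventually_ge_atTop (1:ℝ)] with t ht
        have h0t : (0:ℝ) < t := by linarith
        have h6 := (hst t ht).2
        gcongr
      · exact hlog
    have := hneg.neg
    rw [neg_zero] at this
    apply this.congr
    intro t
    ring
end

section
/- Let F : (0,∞) → ℝ be completely monotonic and let ς : (0,∞) → (0,∞) be a C^∞ function satisfying ς'(t) = F(ς(t)) for all t > 0. Then for each integer n ≥ 1 there exists a completely monotonic function F_n : (0,∞) → ℝ such that (−1)^{n−1} ς^{(n)}(t) = F_n(ς(t)) for all t > 0. In particular ς is a Bernstein function: ς(t) ≥ 0 and (−1)^p ς^{(p)}(t) ≤ 0 for all integers p ≥ 1 and all t > 0. -/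
open MeasureTheory Filter Set

namespace BernsteinAux

/-- `iteratedDerivWithin` on an open set coincides with `iteratedDeriv`. -/
lemma iDW_of_isOpen {f : ℝ → ℝ} {s : Set ℝ} (hs : IsOpen s) {x : ℝ} (hx : x ∈ s) (n : ℕ) :
    iteratedDerivWithin n f s x = iteratedDeriv n f x := by
  rw [iteratedDerivWithin_eq_iteratedFDerivWithin, iteratedDeriv_eq_iteratedFDeriv,
    iteratedFDerivWithin_of_isOpen n hs hx]

/-- Complete monotonicity on `Ioi 0`, phrased with `iteratedDerivWithin`. -/
def CM (f : ℝ → ℝ) : Prop :=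
  ContDiffOn ℝ (⊤ : ℕ∞) f (Set.Ioi 0) ∧
    ∀ p : ℕ, ∀ s ∈ Set.Ioi (0:ℝ), 0 ≤ (-1 : ℝ) ^ p * iteratedDerivWithin p f (Set.Ioi 0) s

lemma uD : UniqueDiffOn ℝ (Set.Ioi (0:ℝ)) := isOpen_Ioi.uniqueDiffOn

lemma CM.negDeriv {f : ℝ → ℝ} (hf : CM f) :
    CM (fun s => -derivWithin f (Set.Ioi 0) s) := by
  constructor
  · exact (hf.1.derivWithin uD (by simp)).neg
  · intro p s hs
    have h1 : iteratedDerivWithin p (fun s => -derivWithin f (Set.Ioi 0) s) (Set.Ioi 0) s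
        = -iteratedDerivWithin p (derivWithin f (Set.Ioi 0)) (Set.Ioi 0) s :=
      iteratedDerivWithin_fun_neg _
    have h2 : iteratedDerivWithin (p+1) f (Set.Ioi 0) s
        = iteratedDerivWithin p (derivWithin f (Set.Ioi 0)) (Set.Ioi 0) s :=
      congrFun iteratedDerivWithin_succ' s
    have := hf.2 (p+1) s hs
    rw [h1, ← h2]
    calc (0:ℝ) ≤ (-1:ℝ)^(p+1) * iteratedDerivWithin (p+1) f (Set.Ioi 0) s := this
    _ = (-1:ℝ)^p * -iteratedDerivWithin (p+1) f (Set.Ioi 0) s := by ring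

lemma CM.mul {f g : ℝ → ℝ} (hf : CM f) (hg : CM g) : CM (fun s => f s * g s) := by
  constructor
  · exact hf.1.mul hg.1
  · intro p
    induction p generalizing f g with
    | zero =>
      intro s hs
      have h0 := hf.2 0 s hs
      have h1 := hg.2 0 s hs
      simp only [iteratedDerivWithin_zero, pow_zero, one_mul] at *
      exact mul_nonneg h0 h1
    | succ p IH =>
      intro s hs
      set f' := fun x => -derivWithin f (Set.Ioi 0) x with hf'def
      set g' := fun x => -derivWithin g (Set.Ioi 0) x with hg'def
      have hf' : CM f' := hf.negDeriv
      have hg' : CM g' := hg.negDeriv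
      have heq : Set.EqOn (derivWithin (fun x => f x * g x) (Set.Ioi 0))
          (fun x => -(f' x * g x + f x * g' x)) (Set.Ioi 0) := by
        intro x hx
        have hdf : DifferentiableWithinAt ℝ f (Set.Ioi 0) x :=
          (hf.1 x hx).differentiableWithinAt (by simp)
        have hdg : DifferentiableWithinAt ℝ g (Set.Ioi 0) x :=
          (hg.1 x hx).differentiableWithinAt (by simp)
        have := derivWithin_fun_mul hdf hdg
        simp only [hf'def, hg'def]
        rw [this]; ring
      have hstep : iteratedDerivWithin (p+1) (fun x => f x * g x) (Set.Ioi 0) s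
          = iteratedDerivWithin p (derivWithin (fun x => f x * g x) (Set.Ioi 0)) (Set.Ioi 0) s :=
        congrFun iteratedDerivWithin_succ' s
      have hcongr : iteratedDerivWithin p (derivWithin (fun x => f x * g x) (Set.Ioi 0)) (Set.Ioi 0) s
          = iteratedDerivWithin p (fun x => -(f' x * g x + f x * g' x)) (Set.Ioi 0) s :=
        iteratedDerivWithin_congr heq hs
      have hs1 : ContDiffOn ℝ p (fun x => f' x * g x) (Set.Ioi 0) :=
        (hf'.1.mul hg.1).of_le (by exact_mod_cast le_top)
      have hs2 : ContDiffOn ℝ p (fun x => f x * g' x) (Set.Ioi 0) :=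
        (hf.1.mul hg'.1).of_le (by exact_mod_cast le_top)
      have hneg : iteratedDerivWithin p (fun x => -(f' x * g x + f x * g' x)) (Set.Ioi 0) s
          = -iteratedDerivWithin p (fun x => f' x * g x + f x * g' x) (Set.Ioi 0) s :=
        iteratedDerivWithin_fun_neg _
      have hadd : iteratedDerivWithin p ((fun x => f' x * g x) + (fun x => f x * g' x)) (Set.Ioi 0) s
          = iteratedDerivWithin p (fun x => f' x * g x) (Set.Ioi 0) s
            + iteratedDerivWithin p (fun x => f x * g' x) (Set.Ioi 0) s :=
        iteratedDerivWithin_add hs uD (hs1 s hs) (hs2 s hs)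
      have h1 := IH hf' hg s hs
      have h2 := IH hf hg' s hs
      have hsum : iteratedDerivWithin p (fun x => f' x * g x + f x * g' x) (Set.Ioi 0) s
          = iteratedDerivWithin p (fun x => f' x * g x) (Set.Ioi 0) s
            + iteratedDerivWithin p (fun x => f x * g' x) (Set.Ioi 0) s := by
        rw [← hadd]; rfl
      rw [hstep, hcongr, hneg, hsum]
      have : (-1:ℝ)^(p+1) * -(iteratedDerivWithin p (fun x => f' x * g x) (Set.Ioi 0) s
            + iteratedDerivWithin p (fun x => f x * g' x) (Set.Ioi 0) s)
          = (-1:ℝ)^p * iteratedDerivWithin p (fun x => f' x * g x) (Set.Ioi 0) s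
            + (-1:ℝ)^p * iteratedDerivWithin p (fun x => f x * g' x) (Set.Ioi 0) s := by ring
      rw [this]
      exact add_nonneg h1 h2

end BernsteinAux

open BernsteinAux

/-- Let `F : (0,∞) → ℝ` be completely monotonic and let
`ς : (0,∞) → (0,∞)` be a `C^∞` function with `ς' = F ∘ ς`.  Then for each `n ≥ 1` there is
a completely monotonic function `F_n` with `(−1)^{n−1} ς^{(n)} = F_n ∘ ς`; in particular
`ς` is a Bernstein function. -/
theorem bernstein_of_ode_completely_monotonic (F ς : ℝ → ℝ)
    (hFsmooth : ContDiffOn ℝ (⊤ : ℕ∞) F (Set.Ioi 0))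
    (hF : ∀ p : ℕ, ∀ t > (0:ℝ), 0 ≤ (-1 : ℝ) ^ p * iteratedDeriv p F t)
    (hςsmooth : ContDiffOn ℝ (⊤ : ℕ∞) ς (Set.Ioi 0))
    (hςpos : ∀ t > (0:ℝ), 0 < ς t)
    (hode : ∀ t > (0:ℝ), HasDerivAt ς (F (ς t)) t) :
    (∀ n : ℕ, 1 ≤ n → ∃ Fn : ℝ → ℝ,
      ContDiffOn ℝ (⊤ : ℕ∞) Fn (Set.Ioi 0) ∧
      (∀ p : ℕ, ∀ s > (0:ℝ), 0 ≤ (-1 : ℝ) ^ p * iteratedDeriv p Fn s) ∧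
      ∀ t > (0:ℝ), (-1 : ℝ) ^ (n - 1) * iteratedDeriv n ς t = Fn (ς t)) ∧
    ((∀ t > (0:ℝ), 0 ≤ ς t) ∧
      ∀ p : ℕ, 1 ≤ p → ∀ t > (0:ℝ), (-1 : ℝ) ^ p * iteratedDeriv p ς t ≤ 0) := by
  have key : ∀ n : ℕ, 1 ≤ n → ∃ Fn : ℝ → ℝ,
      ContDiffOn ℝ (⊤ : ℕ∞) Fn (Set.Ioi 0) ∧
      (∀ p : ℕ, ∀ s > (0:ℝ), 0 ≤ (-1 : ℝ) ^ p * iteratedDeriv p Fn s) ∧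
      ∀ t > (0:ℝ), (-1 : ℝ) ^ (n - 1) * iteratedDeriv n ς t = Fn (ς t) := by
    intro n hn
    induction n, hn using Nat.le_induction with
    | base =>
      refine ⟨F, hFsmooth, hF, ?_⟩
      intro t ht
      simp [iteratedDeriv_one, (hode t ht).deriv]
    | succ n hn IH =>
      obtain ⟨m, rfl⟩ : ∃ m, n = m + 1 := ⟨n - 1, (Nat.succ_pred_eq_of_pos hn).symm⟩
      obtain ⟨Fn, hFns, hFnsign, hFneq⟩ := IH
      have hFnCM : CM Fn := ⟨hFns, fun p s hs => by
        rw [iDW_of_isOpen isOpen_Ioi hs]; exact hFnsign p s hs⟩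
      have hFCM : CM F := ⟨hFsmooth, fun p s hs => by
        rw [iDW_of_isOpen isOpen_Ioi hs]; exact hF p s hs⟩
      set G := fun s => (-derivWithin Fn (Set.Ioi 0) s) * F s with hG
      have hGCM : CM G := CM.mul hFnCM.negDeriv hFCM
      refine ⟨G, hGCM.1, fun p s hs => ?_, ?_⟩
      · have := hGCM.2 p s hs
        rwa [iDW_of_isOpen isOpen_Ioi hs] at this
      intro t ht
      have hςt : ς t ∈ Set.Ioi (0:ℝ) := hςpos t ht
      have hFnd : HasDerivAt Fn (derivWithin Fn (Set.Ioi 0) (ς t)) (ς t) := by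
        have h1 : DifferentiableAt ℝ Fn (ς t) :=
          (hFns.contDiffAt (Ioi_mem_nhds hςt)).differentiableAt (by simp)
        rw [derivWithin_of_isOpen isOpen_Ioi hςt]
        exact h1.hasDerivAt
      have hcomp : HasDerivAt (fun u => (-1:ℝ)^m * Fn (ς u))
          ((-1:ℝ)^m * (derivWithin Fn (Set.Ioi 0) (ς t) * F (ς t))) t :=
        (hFnd.comp t (hode t ht)).const_mul _
      have hev : iteratedDeriv (m+1) ς =ᶠ[nhds t] (fun u => (-1:ℝ)^m * Fn (ς u)) := by
        filter_upwards [Ioi_mem_nhds ht] with u hu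
        have h := hFneq u hu
        simp only [Nat.add_sub_cancel] at h
        have hsq : (-1:ℝ)^m * ((-1:ℝ)^m * iteratedDeriv (m+1) ς u)
            = iteratedDeriv (m+1) ς u := by
          rw [← mul_assoc, ← pow_add, ← two_mul, pow_mul]; norm_num
        rw [← h, hsq]
      rw [iteratedDeriv_succ, hev.deriv_eq, hcomp.deriv]
      simp only [Nat.add_sub_cancel, hG]
      have hm : (-1:ℝ)^m * (-1:ℝ)^m = 1 := by
        rw [← pow_add, ← two_mul, pow_mul]; norm_num
      rw [pow_succ]
      linear_combination (-(derivWithin Fn (Set.Ioi 0) (ς t)) * F (ς t)) * hm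
  refine ⟨key, fun t ht => (hςpos t ht).le, ?_⟩
  intro p hp t ht
  obtain ⟨m, rfl⟩ : ∃ m, p = m + 1 := ⟨p - 1, (Nat.succ_pred_eq_of_pos hp).symm⟩
  obtain ⟨Fp, _, hFpsign, hFpeq⟩ := key (m+1) hp
  have h0 : 0 ≤ Fp (ς t) := by
    have := hFpsign 0 (ς t) (hςpos t ht)
    simpa using this
  have h := hFpeq t ht
  simp only [Nat.add_sub_cancel] at h
  rw [pow_succ]
  nlinarith [h, h0]
end

section
/- The entire function f(z) = e^{−z} + z is injective on the open strip S = { z ∈ ℂ : 0 < Im z < 2π }, and its image f(S) equals ℂ \ ( { w ∈ ℂ : Im w = 2π and Re w ≥ 1 } ∪ { w ∈ ℂ : Im w = 0 and Re w ≥ 1 } ). In particular f is a conformal mapping of S onto this slit plane. -/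
/-!
Write `f z = exp (-z) + z` and `z = x + y i`. If `z` lies in the strip and `Im f z = v < π`, then
`v < y < π` and `exp (-x) = (y - v) / sin y`, so the level set `{Im f = v}` of the strip is a curve
parametrised by `y ∈ (max v 0, π)`, along which `Re f = levelRe v y`. This function of `y` has
negative derivative; it tends to `-∞` as `y → π` and to `+∞` at the left end, except for `v = 0`,
where the limit is `1`. So `f` maps each such level curve bijectively onto the line `Im w = v`,
minus the half-line `Re w ≥ 1` when `v = 0`. The line `Im z = π` goes onto `Im w = π` through
`x ↦ x - exp (-x)`, and the reflection `z ↦ z̄ + 2πi` of the strip commutes with `f` and reduces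
`v > π` to `v < π`.
-/

open Complex Set
open scoped Real
open Filter Topology ComplexConjugate

namespace ExpNegAddId

theorem exists_mem_Ioo_eq_of_eventually {f : ℝ → ℝ} {a b u : ℝ} (hab : a < b)
    (hf : ContinuousOn f (Ioo a b)) (ha : ∀ᶠ y in 𝓝[>] a, u ≤ f y)
    (hb : ∀ᶠ y in 𝓝[<] b, f y ≤ u) : ∃ y ∈ Ioo a b, f y = u := by
  obtain ⟨y₁, hu₁, hy₁⟩ := (ha.and (Ioo_mem_nhdsGT hab)).exists
  obtain ⟨y₂, hu₂, hy₂⟩ := (hb.and (Ioo_mem_nhdsLT hab)).exists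
  obtain ⟨y, hy, hfy⟩ :=
    isPreconnected_Ioo.intermediate_value₂ hy₁ hy₂ continuousOn_const hf hu₁ hu₂
  exact ⟨y, hy, hfy.symm⟩

section LogAddDiv

variable {α : Type*} {l : Filter α} {q c : α → ℝ} {c₀ : ℝ}

theorem tendsto_log_add_div_atBot (hq : Tendsto q l (𝓝[>] 0)) (hc : Tendsto c l (𝓝 c₀))
    (hc₀ : c₀ < 0) : Tendsto (fun a => Real.log (q a) + c a / q a) l atBot :=
  (Real.tendsto_log_nhdsGT_zero.comp hq).atBot_add_atBot <| by
    simpa only [div_eq_mul_inv, Function.comp_def] using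
      hc.neg_mul_atTop hc₀ (tendsto_inv_nhdsGT_zero.comp hq)

theorem tendsto_log_add_div_atTop_of_pos (hq : Tendsto q l (𝓝[>] 0)) (hc : Tendsto c l (𝓝 c₀))
    (hc₀ : 0 < c₀) : Tendsto (fun a => Real.log (q a) + c a / q a) l atTop := by
  have hq₀ := tendsto_nhdsWithin_iff.1 hq
  have hmul : Tendsto (fun a => q a * Real.log (q a) + c a) l (𝓝 c₀) := by
    simpa using ((Real.continuous_mul_log.tendsto 0).comp hq₀.1).add hc
  refine (hmul.pos_mul_atTop hc₀ (tendsto_inv_nhdsGT_zero.comp hq)).congr' ?_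
  filter_upwards [hq₀.2] with a (ha : 0 < q a)
  simp only [Function.comp_apply]
  field_simp

theorem tendsto_log_add_div_atTop (hq : Tendsto q l atTop) (hc : Tendsto c l (𝓝 c₀)) :
    Tendsto (fun a => Real.log (q a) + c a / q a) l atTop :=
  (Real.tendsto_log_atTop.comp hq).atTop_add (hc.div_atTop hq)

end LogAddDiv

def strip : Set ℂ := {z : ℂ | 0 < z.im ∧ z.im < 2 * π}

section Strip

variable {z : ℂ}

theorem re_exp_neg_add (z : ℂ) :
    (exp (-z) + z).re = z.re + Real.exp (-z.re) * Real.cos z.im := by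
  simp only [add_re, exp_re, neg_re, neg_im, Real.cos_neg]
  ring

theorem im_exp_neg_add (z : ℂ) :
    (exp (-z) + z).im = z.im - Real.exp (-z.re) * Real.sin z.im := by
  simp only [add_im, exp_im, neg_re, neg_im, Real.sin_neg]
  ring

theorem im_exp_neg_add_lt (h0 : 0 < z.im) (hπ : z.im < π) : (exp (-z) + z).im < z.im := by
  rw [im_exp_neg_add]
  have := Real.sin_pos_of_pos_of_lt_pi h0 hπ
  have := Real.exp_pos (-z.re)
  nlinarith

theorem lt_im_exp_neg_add (hπ : π < z.im) (h2π : z.im < 2 * π) : z.im < (exp (-z) + z).im := by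
  rw [im_exp_neg_add]
  have : Real.sin z.im < 0 := by
    rw [← Real.sin_sub_two_pi]
    exact Real.sin_neg_of_neg_of_neg_pi_lt (by linarith) (by linarith)
  have := Real.exp_pos (-z.re)
  nlinarith

theorem exp_neg_add_of_im_eq_pi (hz : z.im = π) :
    exp (-z) + z = ⟨z.re - Real.exp (-z.re), π⟩ :=
  Complex.ext (by rw [re_exp_neg_add, hz, Real.cos_pi]; ring)
    (by rw [im_exp_neg_add, hz, Real.sin_pi]; ring)

theorem im_lt_pi_of_im_exp_neg_add_lt_pi (hz : z ∈ strip) (h : (exp (-z) + z).im < π) :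
    z.im < π := by
  rcases lt_trichotomy z.im π with hπ | hπ | hπ
  · exact hπ
  · rw [exp_neg_add_of_im_eq_pi hπ] at h
    exact absurd h (lt_irrefl π)
  · linarith [lt_im_exp_neg_add hπ hz.2]

theorem im_eq_pi_of_im_exp_neg_add_eq_pi (hz : z ∈ strip) (h : (exp (-z) + z).im = π) :
    z.im = π := by
  rcases lt_trichotomy z.im π with hπ | hπ | hπ
  · linarith [im_exp_neg_add_lt hz.1 hπ]
  · exact hπ
  · linarith [lt_im_exp_neg_add hπ hz.2]

end Strip

section LevelCurve

variable {u v y : ℝ} {z : ℂ}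

theorem sin_pos_and_sub_pos (hy : y ∈ Ioo (max v 0) π) : 0 < Real.sin y ∧ 0 < y - v :=
  ⟨Real.sin_pos_of_pos_of_lt_pi (lt_of_le_of_lt (le_max_right _ _) hy.1) hy.2,
    sub_pos.2 (lt_of_le_of_lt (le_max_left _ _) hy.1)⟩

noncomputable def levelPoint (v y : ℝ) : ℂ := (Real.log (Real.sin y / (y - v)) : ℂ) + y * I

/-- With `q = sin y / (y - v) = exp x`, this is `x + exp (-x) * cos y = Re f (levelPoint v y)`. -/
noncomputable def levelRe (v y : ℝ) : ℝ :=
  Real.log (Real.sin y / (y - v)) + Real.cos y / (Real.sin y / (y - v))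

@[simp] theorem re_levelPoint (v y : ℝ) :
    (levelPoint v y).re = Real.log (Real.sin y / (y - v)) := by
  simp [levelPoint]

@[simp] theorem im_levelPoint (v y : ℝ) : (levelPoint v y).im = y := by
  simp [levelPoint]

theorem levelPoint_mem_strip (hy : y ∈ Ioo (max v 0) π) : levelPoint v y ∈ strip := by
  have := lt_of_le_of_lt (le_max_right _ _) hy.1
  exact ⟨by simpa using this, by simp; linarith [hy.2, Real.pi_pos]⟩

theorem exp_neg_add_levelPoint (hy : y ∈ Ioo (max v 0) π) :
    exp (-levelPoint v y) + levelPoint v y = ⟨levelRe v y, v⟩ := by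
  obtain ⟨hs, hr⟩ := sin_pos_and_sub_pos hy
  have hexp : Real.exp (-(levelPoint v y).re) = (y - v) / Real.sin y := by
    rw [re_levelPoint, Real.exp_neg, Real.exp_log (div_pos hs hr), inv_div]
  apply Complex.ext
  · rw [re_exp_neg_add, hexp, re_levelPoint, im_levelPoint, levelRe]
    field_simp
  · rw [im_exp_neg_add, hexp, im_levelPoint]
    field_simp
    ring

theorem im_mem_Ioo (hz : z ∈ strip) (h : (exp (-z) + z).im < π) :
    z.im ∈ Ioo (max (exp (-z) + z).im 0) π := by
  have hπ := im_lt_pi_of_im_exp_neg_add_lt_pi hz h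
  exact ⟨max_lt (im_exp_neg_add_lt hz.1 hπ) hz.1, hπ⟩

theorem eq_levelPoint (hz : z ∈ strip) (h : (exp (-z) + z).im < π) :
    z = levelPoint (exp (-z) + z).im z.im := by
  obtain ⟨hs, -⟩ := sin_pos_and_sub_pos (im_mem_Ioo hz h)
  have hq : Real.sin z.im / (z.im - (exp (-z) + z).im) = Real.exp z.re := by
    rw [im_exp_neg_add, sub_sub_cancel, Real.exp_neg]
    field_simp
  apply Complex.ext
  · rw [re_levelPoint, hq, Real.log_exp]
  · rw [im_levelPoint]

theorem re_exp_neg_add_eq_levelRe (hz : z ∈ strip) (h : (exp (-z) + z).im < π) :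
    (exp (-z) + z).re = levelRe (exp (-z) + z).im z.im := by
  conv_lhs => rw [eq_levelPoint hz h]
  rw [exp_neg_add_levelPoint (im_mem_Ioo hz h)]

theorem hasDerivAt_levelRe (hy : y ∈ Ioo (max v 0) π) :
    HasDerivAt (levelRe v)
      (-((y - v - Real.sin y * Real.cos y) ^ 2 + Real.sin y ^ 4) / ((y - v) * Real.sin y ^ 2))
      y := by
  obtain ⟨hs, hr⟩ := sin_pos_and_sub_pos hy
  have hq : HasDerivAt (fun y => Real.sin y / (y - v))
      ((Real.cos y * (y - v) - Real.sin y * 1) / (y - v) ^ 2) y :=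
    (Real.hasDerivAt_sin y).div ((hasDerivAt_id y).sub_const v) hr.ne'
  refine ((hq.log (by positivity)).add
    ((Real.hasDerivAt_cos y).div hq (by positivity))).congr_deriv ?_
  field_simp
  linear_combination (Real.sin y ^ 2 - (y - v) ^ 2) * Real.sin_sq_add_cos_sq y

theorem continuousOn_levelRe (v : ℝ) : ContinuousOn (levelRe v) (Ioo (max v 0) π) :=
  fun _ hy => (hasDerivAt_levelRe hy).continuousAt.continuousWithinAt

theorem levelRe_strictAntiOn (v : ℝ) : StrictAntiOn (levelRe v) (Ioo (max v 0) π) := by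
  refine strictAntiOn_of_deriv_neg (convex_Ioo _ _) (continuousOn_levelRe v) fun y hy => ?_
  rw [interior_Ioo] at hy
  obtain ⟨hs, hr⟩ := sin_pos_and_sub_pos hy
  rw [(hasDerivAt_levelRe hy).deriv]
  exact div_neg_of_neg_of_pos (neg_neg_of_pos (by positivity)) (by positivity)

theorem tendsto_sin_div_sub_nhdsGT_zero {a : ℝ} {s : Set ℝ} (ha : Real.sin a = 0) (hva : v < a)
    (hpos : ∀ᶠ y in 𝓝[s] a, 0 < Real.sin y) :
    Tendsto (fun y => Real.sin y / (y - v)) (𝓝[s] a) (𝓝[>] 0) := by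
  refine tendsto_nhdsWithin_iff.2 ⟨?_, ?_⟩
  · have := (Real.continuous_sin.tendsto a).div ((continuous_sub_right v).tendsto a)
      (sub_pos.2 hva).ne'
    rw [ha, zero_div] at this
    exact this.mono_left nhdsWithin_le_nhds
  · filter_upwards [hpos, nhdsWithin_le_nhds (eventually_gt_nhds hva)] with y hs hy
    exact div_pos hs (sub_pos.2 hy)

theorem tendsto_levelRe_nhdsLT_pi (hv : v < π) : Tendsto (levelRe v) (𝓝[<] π) atBot := by
  have hpos : ∀ᶠ y in 𝓝[<] π, 0 < Real.sin y := by
    filter_upwards [Ioo_mem_nhdsLT Real.pi_pos] with y hy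
    exact Real.sin_pos_of_pos_of_lt_pi hy.1 hy.2
  have hcos : Tendsto Real.cos (𝓝[<] π) (𝓝 (-1)) := by
    simpa using (Real.continuous_cos.tendsto π).mono_left nhdsWithin_le_nhds
  exact tendsto_log_add_div_atBot (tendsto_sin_div_sub_nhdsGT_zero Real.sin_pi hv hpos) hcos
    (by norm_num)

theorem tendsto_levelRe_nhdsGT_zero_of_neg (hv : v < 0) : Tendsto (levelRe v) (𝓝[>] 0) atTop := by
  have hpos : ∀ᶠ y in 𝓝[>] 0, 0 < Real.sin y := by
    filter_upwards [Ioo_mem_nhdsGT Real.pi_pos] with y hy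
    exact Real.sin_pos_of_pos_of_lt_pi hy.1 hy.2
  have hcos : Tendsto Real.cos (𝓝[>] 0) (𝓝 1) := by
    simpa using (Real.continuous_cos.tendsto 0).mono_left nhdsWithin_le_nhds
  exact tendsto_log_add_div_atTop_of_pos
    (tendsto_sin_div_sub_nhdsGT_zero Real.sin_zero hv hpos) hcos one_pos

theorem tendsto_levelRe_nhdsGT_self (hv0 : 0 < v) (hvπ : v < π) :
    Tendsto (levelRe v) (𝓝[>] v) atTop := by
  have hsub : Tendsto (fun y => y - v) (𝓝[>] v) (𝓝[>] 0) := by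
    refine tendsto_nhdsWithin_iff.2 ⟨?_, ?_⟩
    · simpa using ((continuous_sub_right v).tendsto v).mono_left nhdsWithin_le_nhds
    · filter_upwards [self_mem_nhdsWithin] with y (hy : v < y)
      exact sub_pos.2 hy
  have hq : Tendsto (fun y => Real.sin y / (y - v)) (𝓝[>] v) atTop := by
    simpa only [div_eq_mul_inv, Pi.inv_apply] using
      ((Real.continuous_sin.tendsto v).mono_left nhdsWithin_le_nhds).pos_mul_atTop
        (Real.sin_pos_of_pos_of_lt_pi hv0 hvπ) hsub.inv_tendsto_nhdsGT_zero
  exact tendsto_log_add_div_atTop hq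
    ((Real.continuous_cos.tendsto v).mono_left nhdsWithin_le_nhds)

theorem tendsto_levelRe_zero_nhdsGT_zero : Tendsto (levelRe 0) (𝓝[>] 0) (𝓝 1) := by
  have hcont : ContinuousAt (fun y => Real.log (Real.sinc y) + Real.cos y / Real.sinc y) 0 := by
    have h1 : Real.sinc 0 ≠ 0 := by simp
    exact (Real.continuous_sinc.continuousAt.log h1).add
      (Real.continuous_cos.continuousAt.div Real.continuous_sinc.continuousAt h1)
  have h := hcont.tendsto.mono_left (nhdsWithin_le_nhds (s := Ioi 0))
  simp only [Real.sinc_zero, Real.log_one, Real.cos_zero, div_one, zero_add] at h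
  refine h.congr' ?_
  filter_upwards [self_mem_nhdsWithin] with y (hy : 0 < y)
  simp [levelRe, Real.sinc_of_ne_zero hy.ne']

theorem levelRe_zero_lt_one (hy : y ∈ Ioo 0 π) : levelRe 0 y < 1 := by
  have hanti : StrictAntiOn (levelRe 0) (Ioo 0 π) := by
    simpa using levelRe_strictAntiOn 0
  have hy2 : y / 2 ∈ Ioo 0 π := ⟨half_pos hy.1, by linarith [hy.1, hy.2]⟩
  calc levelRe 0 y < levelRe 0 (y / 2) := hanti hy2 hy (by linarith [hy.1])
    _ ≤ 1 := by
      refine ge_of_tendsto tendsto_levelRe_zero_nhdsGT_zero ?_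
      filter_upwards [Ioo_mem_nhdsGT hy2.1] with c hc
      exact hanti.antitoneOn ⟨hc.1, hc.2.trans hy2.2⟩ hy2 hc.2.le

theorem exists_levelRe_eq (hvπ : v < π) (hv0 : v = 0 → u < 1) :
    ∃ y ∈ Ioo (max v 0) π, levelRe v y = u := by
  refine exists_mem_Ioo_eq_of_eventually (max_lt hvπ Real.pi_pos) (continuousOn_levelRe v) ?_
    ((tendsto_levelRe_nhdsLT_pi hvπ).eventually (eventually_le_atBot u))
  rcases lt_trichotomy v 0 with hv | rfl | hv
  · rw [max_eq_right hv.le]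
    exact (tendsto_levelRe_nhdsGT_zero_of_neg hv).eventually (eventually_ge_atTop u)
  · rw [max_self]
    exact tendsto_levelRe_zero_nhdsGT_zero.eventually (eventually_ge_nhds (hv0 rfl))
  · rw [max_eq_left hv.le]
    exact (tendsto_levelRe_nhdsGT_self hv hvπ).eventually (eventually_ge_atTop u)

end LevelCurve

section Image

variable {w z₁ z₂ : ℂ}

theorem mem_image_strip_iff_of_im_lt_pi (hw : w.im < π) :
    w ∈ (fun z => exp (-z) + z) '' strip ↔ (w.im = 0 → w.re < 1) := by
  constructor
  · rintro ⟨z, hz, rfl⟩ h0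
    have hy := im_mem_Ioo hz hw
    rw [h0, max_self] at hy
    rw [re_exp_neg_add_eq_levelRe hz hw, h0]
    exact levelRe_zero_lt_one hy
  · intro h
    obtain ⟨y, hy, hyu⟩ := exists_levelRe_eq hw h
    refine ⟨levelPoint w.im y, levelPoint_mem_strip hy, ?_⟩
    simp only [exp_neg_add_levelPoint hy, hyu]

theorem eq_of_exp_neg_add_eq_of_im_lt_pi (h₁ : z₁ ∈ strip) (h₂ : z₂ ∈ strip)
    (h : exp (-z₁) + z₁ = exp (-z₂) + z₂) (hπ : (exp (-z₁) + z₁).im < π) : z₁ = z₂ := by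
  have hπ' : (exp (-z₂) + z₂).im < π := h ▸ hπ
  have hy : z₁.im = z₂.im := by
    refine (levelRe_strictAntiOn _).injOn (h ▸ im_mem_Ioo h₁ hπ) (im_mem_Ioo h₂ hπ') ?_
    rw [← re_exp_neg_add_eq_levelRe h₂ hπ', ← h, re_exp_neg_add_eq_levelRe h₁ hπ, h]
  rw [eq_levelPoint h₁ hπ, eq_levelPoint h₂ hπ', h, hy]

theorem strictMono_sub_exp_neg : StrictMono fun x : ℝ => x - Real.exp (-x) := fun x y h => by
  have := Real.exp_lt_exp.2 (neg_lt_neg h)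
  dsimp only
  linarith

theorem surjective_sub_exp_neg : Function.Surjective fun x : ℝ => x - Real.exp (-x) := by
  refine Continuous.surjective (by fun_prop) ?_ ?_
  · simpa [sub_eq_add_neg] using tendsto_id.atTop_add Real.tendsto_exp_neg_atTop_nhds_zero.neg
  · exact tendsto_id.atBot_add_atBot
      (tendsto_neg_atTop_atBot.comp (Real.tendsto_exp_atTop.comp tendsto_neg_atBot_atTop))

theorem mem_image_strip_of_im_eq_pi (hw : w.im = π) : w ∈ (fun z => exp (-z) + z) '' strip := by
  obtain ⟨x, hx⟩ := surjective_sub_exp_neg w.re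
  refine ⟨⟨x, π⟩, ⟨Real.pi_pos, by linarith [Real.pi_pos]⟩, ?_⟩
  dsimp only
  rw [exp_neg_add_of_im_eq_pi rfl]
  exact Complex.ext hx hw.symm

theorem eq_of_exp_neg_add_eq_of_im_eq_pi (h₁ : z₁ ∈ strip) (h₂ : z₂ ∈ strip)
    (h : exp (-z₁) + z₁ = exp (-z₂) + z₂) (hπ : (exp (-z₁) + z₁).im = π) : z₁ = z₂ := by
  have e₁ := im_eq_pi_of_im_exp_neg_add_eq_pi h₁ hπ
  have e₂ := im_eq_pi_of_im_exp_neg_add_eq_pi h₂ (h ▸ hπ)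
  rw [exp_neg_add_of_im_eq_pi e₁, exp_neg_add_of_im_eq_pi e₂] at h
  exact Complex.ext (strictMono_sub_exp_neg.injective (congrArg re h)) (e₁.trans e₂.symm)

noncomputable def stripReflect (z : ℂ) : ℂ := conj z + 2 * π * I

@[simp] theorem re_stripReflect (z : ℂ) : (stripReflect z).re = z.re := by
  simp [stripReflect]

@[simp] theorem im_stripReflect (z : ℂ) : (stripReflect z).im = 2 * π - z.im := by
  simp [stripReflect]
  ring

theorem stripReflect_stripReflect (z : ℂ) : stripReflect (stripReflect z) = z :=
  Complex.ext (by simp) (by simp)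

theorem stripReflect_mem_strip {z : ℂ} (hz : z ∈ strip) : stripReflect z ∈ strip := by
  obtain ⟨h0, h2π⟩ := hz
  constructor <;> simp <;> linarith

theorem exp_neg_add_stripReflect (z : ℂ) :
    exp (-stripReflect z) + stripReflect z = stripReflect (exp (-z) + z) :=
  Complex.ext
    (by simp only [re_exp_neg_add, re_stripReflect, im_stripReflect, Real.cos_two_pi_sub])
    (by simp only [im_exp_neg_add, re_stripReflect, im_stripReflect, Real.sin_two_pi_sub]; ring)

theorem stripReflect_mem_image_strip (hw : w ∈ (fun z => exp (-z) + z) '' strip) :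
    stripReflect w ∈ (fun z => exp (-z) + z) '' strip := by
  obtain ⟨z, hz, rfl⟩ := hw
  exact ⟨stripReflect z, stripReflect_mem_strip hz, exp_neg_add_stripReflect z⟩

theorem mem_image_strip_iff (w : ℂ) : w ∈ (fun z => exp (-z) + z) '' strip ↔
    (w.im = 2 * π → w.re < 1) ∧ (w.im = 0 → w.re < 1) := by
  rcases lt_trichotomy w.im π with hw | hw | hw
  · rw [mem_image_strip_iff_of_im_lt_pi hw]
    have : w.im ≠ 2 * π := by linarith [Real.pi_pos]
    tauto
  · have h0 : w.im ≠ 0 := by linarith [Real.pi_pos]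
    have h2π : w.im ≠ 2 * π := by linarith [Real.pi_pos]
    simp only [mem_image_strip_of_im_eq_pi hw, h0, h2π, false_imp_iff, and_self]
  · have hσ : (stripReflect w).im < π := by simp; linarith
    have hmem : w ∈ (fun z => exp (-z) + z) '' strip ↔
        stripReflect w ∈ (fun z => exp (-z) + z) '' strip :=
      ⟨stripReflect_mem_image_strip,
        fun h => stripReflect_stripReflect w ▸ stripReflect_mem_image_strip h⟩
    rw [hmem, mem_image_strip_iff_of_im_lt_pi hσ, re_stripReflect, im_stripReflect, sub_eq_zero,
      eq_comm]
    have : w.im ≠ 0 := by linarith [Real.pi_pos]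
    tauto

theorem injOn_strip : InjOn (fun z => exp (-z) + z) strip := by
  intro z₁ h₁ z₂ h₂ (h : exp (-z₁) + z₁ = exp (-z₂) + z₂)
  rcases lt_trichotomy (exp (-z₁) + z₁).im π with hπ | hπ | hπ
  · exact eq_of_exp_neg_add_eq_of_im_lt_pi h₁ h₂ h hπ
  · exact eq_of_exp_neg_add_eq_of_im_eq_pi h₁ h₂ h hπ
  · have hσ := eq_of_exp_neg_add_eq_of_im_lt_pi (stripReflect_mem_strip h₁)
      (stripReflect_mem_strip h₂) (by rw [exp_neg_add_stripReflect, exp_neg_add_stripReflect, h])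
      (by rw [exp_neg_add_stripReflect, im_stripReflect]; linarith)
    simpa only [stripReflect_stripReflect] using congrArg stripReflect hσ

end Image

end ExpNegAddId

/-- The entire function `f(z) = e^{−z} + z` is injective on the strip
`S = {0 < Im z < 2π}` and maps it onto the plane minus the two closed half-lines
`{Im w = 0, Re w ≥ 1}` and `{Im w = 2π, Re w ≥ 1}`; i.e. `f` is a conformal map of `S`
onto this slit plane. -/
theorem exp_neg_add_id_conformal_on_strip :
    Set.InjOn (fun z : ℂ => Complex.exp (-z) + z)
      {z : ℂ | 0 < z.im ∧ z.im < 2 * Real.pi} ∧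
    (fun z : ℂ => Complex.exp (-z) + z) '' {z : ℂ | 0 < z.im ∧ z.im < 2 * Real.pi} =
      Set.univ \ ({w : ℂ | w.im = 2 * Real.pi ∧ 1 ≤ w.re} ∪
        {w : ℂ | w.im = 0 ∧ 1 ≤ w.re}) := by
  refine ⟨ExpNegAddId.injOn_strip, Set.ext fun w => ?_⟩
  refine (ExpNegAddId.mem_image_strip_iff w).trans ?_
  simp only [Set.mem_sdiff, mem_univ, mem_union, mem_ofPred_eq, true_and, not_or, not_and, not_le]
end

section
/- For each t > 0 there is a unique z(t) ∈ ℂ with 0 < Im z(t) < 2π and e^{−z(t)} + z(t) = 1 − t. The function Y(t) = Im z(t) is strictly increasing on (0,∞), with lim_{t→0+} Y(t) = 0 and lim_{t→∞} Y(t) = π. (Equivalently, the density η(t) = Y(t)/π in the Pick representation of w ↦ f^{−1}(1−w) increases from 0 to 1 on (0,∞).) -/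
open Complex Filter Set

/-!
For `z = a + iy` in the strip, `Im (e^{-z} + z) = 0` reads `e^{-a} sin y = y`, which forces
`0 < y < π` and `a = log (sinc y)`; the real part is then
`g y = cos y / sinc y + log (sinc y)`. Since
`g' y = -((y - sin y cos y)² + sin⁴ y) / (y sin² y) < 0`, `g` decreases strictly from `g 0 = 1`
to `-∞` at `π`, so `Y t = g⁻¹ (1 - t)` is an increasing bijection `(0, ∞) → (0, π)`,
and a monotone bijection between open intervals has the endpoint limits.
-/

open scoped Real Topology

section MonotoneLimits

variable {α β : Type*} [LinearOrder β] [DenselyOrdered β] [TopologicalSpace β] [OrderTopology β]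
  {f : α → β} {a : α} {b c : β}

theorem MonotoneOn.tendsto_nhdsGT_of_surjOn [LinearOrder α] [TopologicalSpace α]
    [OrderTopology α] (hf : MonotoneOn f (Ioi a)) (hmaps : MapsTo f (Ioi a) (Ioo b c))
    (hsurj : SurjOn f (Ioi a) (Ioo b c)) (hbc : b < c) : Tendsto f (𝓝[>] a) (𝓝 b) := by
  refine tendsto_order.2 ⟨fun x hx => ?_, fun x hx => ?_⟩
  · filter_upwards [self_mem_nhdsWithin] with t ht using hx.trans (hmaps ht).1
  · obtain ⟨y, hby, hyx⟩ := exists_between (lt_min hx hbc)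
    obtain ⟨s, hs, rfl⟩ := hsurj ⟨hby, hyx.trans_le (min_le_right _ _)⟩
    filter_upwards [Ioo_mem_nhdsGT hs] with t ht
    exact (hf ht.1 hs ht.2.le).trans_lt (hyx.trans_le (min_le_left _ _))

theorem MonotoneOn.tendsto_atTop_of_surjOn [Preorder α] (hf : MonotoneOn f (Ioi a))
    (hmaps : MapsTo f (Ioi a) (Ioo b c)) (hsurj : SurjOn f (Ioi a) (Ioo b c)) (hbc : b < c) :
    Tendsto f atTop (𝓝 c) := by
  obtain ⟨y₀, hy₀⟩ := nonempty_Ioo.2 hbc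
  obtain ⟨s₀, hs₀, -⟩ := hsurj hy₀
  refine tendsto_order.2 ⟨fun x hx => ?_, fun x hx => ?_⟩
  · obtain ⟨y, hxy, hyc⟩ := exists_between (max_lt hx hbc)
    obtain ⟨s, hs, rfl⟩ := hsurj ⟨(le_max_right _ _).trans_lt hxy, hyc⟩
    filter_upwards [eventually_ge_atTop s] with t ht
    exact ((le_max_left _ _).trans_lt hxy).trans_le (hf hs (lt_of_lt_of_le hs ht) ht)
  · filter_upwards [eventually_ge_atTop s₀] with t ht
    exact (hmaps (lt_of_lt_of_le hs₀ ht)).2.trans hx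

end MonotoneLimits

namespace Real

theorem sinc_pos {x : ℝ} (hx : |x| < π) : 0 < sinc x := by
  rcases lt_trichotomy x 0 with hneg | rfl | hpos
  · rw [← sinc_neg, sinc_of_ne_zero (neg_ne_zero.2 hneg.ne)]
    exact div_pos (sin_pos_of_pos_of_lt_pi (neg_pos.2 hneg) (neg_lt.1 (abs_lt.1 hx).1))
      (neg_pos.2 hneg)
  · simp
  · rw [sinc_of_ne_zero hpos.ne']
    exact div_pos (sin_pos_of_pos_of_lt_pi hpos (lt_of_abs_lt hx)) hpos

theorem sin_div_sinc {x : ℝ} (hx : sinc x ≠ 0) : sin x / sinc x = x := by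
  rcases eq_or_ne x 0 with rfl | hx0
  · simp
  · rw [sinc_of_ne_zero hx0] at hx ⊢
    field_simp [div_ne_zero_iff.1 hx]

theorem hasDerivAt_sinc {x : ℝ} (hx : x ≠ 0) :
    HasDerivAt sinc ((x * cos x - sin x) / x ^ 2) x := by
  have hsinc : (fun y => sin y / y) =ᶠ[𝓝 x] sinc := by
    filter_upwards [isOpen_ne.mem_nhds hx] with y hy using (sinc_of_ne_zero hy).symm
  refine (((hasDerivAt_sin x).div (hasDerivAt_id x) hx).congr_of_eventuallyEq
    hsinc.symm).congr_deriv ?_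
  simp only [id]
  ring

end Real

/-- On the strip `0 < Im z < 2π`, the map `z ↦ e^{-z} + z` is real exactly on the curve
`y ↦ realLocus y`, `0 < y < π`, where it takes the value `realLocusValue y`. -/
noncomputable def realLocus (y : ℝ) : ℂ := (Real.log (Real.sinc y) : ℂ) + y * I

noncomputable def realLocusValue (y : ℝ) : ℝ := Real.cos y / Real.sinc y + Real.log (Real.sinc y)

@[simp]
theorem realLocus_im (y : ℝ) : (realLocus y).im = y := by simp [realLocus]

theorem sinc_pos_of_mem_Ico {y : ℝ} (hy : y ∈ Ico 0 π) : 0 < Real.sinc y :=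
  Real.sinc_pos (abs_lt.2 ⟨by linarith [hy.1, Real.pi_pos], hy.2⟩)

theorem exp_neg_realLocus_add_realLocus {y : ℝ} (hy : 0 < Real.sinc y) :
    exp (-realLocus y) + realLocus y = realLocusValue y := by
  have hexp : Real.exp (-Real.log (Real.sinc y)) = (Real.sinc y)⁻¹ := by
    rw [Real.exp_neg, Real.exp_log hy]
  apply Complex.ext
  · rw [ofReal_re]
    simp [realLocus, realLocusValue, exp_re, hexp, div_eq_inv_mul]
  · simp [realLocus, realLocusValue, exp_im, hexp, ← div_eq_inv_mul, Real.sin_div_sinc hy.ne']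

theorem eq_realLocus_of_im_eq_zero {w : ℂ} (h0 : 0 < w.im) (h2π : w.im < 2 * π)
    (him : (exp (-w) + w).im = 0) : w.im ∈ Ioo 0 π ∧ w = realLocus w.im := by
  have hsin : Real.exp (-w.re) * Real.sin w.im = w.im := by
    simp only [add_im, exp_im, neg_re, neg_im, Real.sin_neg, mul_neg] at him
    linarith
  have hsin_pos : 0 < Real.sin w.im := pos_of_mul_pos_right (hsin ▸ h0) (Real.exp_pos _).le
  have hlt : w.im < π := by
    by_contra! hle
    have := Real.sin_nonpos_of_nonpos_of_neg_pi_le (x := w.im - 2 * π) (by linarith) (by linarith)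
    rw [Real.sin_sub_two_pi] at this
    linarith
  refine ⟨⟨h0, hlt⟩, Complex.ext ?_ (by simp)⟩
  have hsinc : Real.sinc w.im = Real.exp w.re := by
    rw [Real.sinc_of_ne_zero h0.ne', div_eq_iff h0.ne']
    conv_rhs => rw [← hsin, ← mul_assoc, ← Real.exp_add, add_neg_cancel, Real.exp_zero, one_mul]
  simp [realLocus, hsinc]

theorem continuousOn_realLocusValue : ContinuousOn realLocusValue (Ico 0 π) := fun _ hy =>
  have hs := sinc_pos_of_mem_Ico hy
  ((Real.continuous_cos.continuousAt.div Real.continuous_sinc.continuousAt hs.ne').add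
    (Real.continuous_sinc.continuousAt.log hs.ne')).continuousWithinAt

theorem hasDerivAt_realLocusValue {y : ℝ} (hy : y ∈ Ioo 0 π) :
    HasDerivAt realLocusValue
      (-((y - Real.sin y * Real.cos y) ^ 2 + Real.sin y ^ 4) / (y * Real.sin y ^ 2)) y := by
  have hy0 : y ≠ 0 := hy.1.ne'
  have hs := sinc_pos_of_mem_Ico (Ioo_subset_Ico_self hy)
  have hsin := Real.sin_pos_of_pos_of_lt_pi hy.1 hy.2
  refine (((Real.hasDerivAt_cos y).div (Real.hasDerivAt_sinc hy0) hs.ne').add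
    ((Real.hasDerivAt_sinc hy0).log hs.ne')).congr_deriv ?_
  rw [Real.sinc_of_ne_zero hy0]
  field_simp
  linear_combination (Real.sin y ^ 2 - y ^ 2) * Real.sin_sq_add_cos_sq y

theorem strictAntiOn_realLocusValue : StrictAntiOn realLocusValue (Ico 0 π) := by
  refine strictAntiOn_of_deriv_neg (convex_Ico 0 π) continuousOn_realLocusValue fun y hy => ?_
  rw [interior_Ico] at hy
  rw [(hasDerivAt_realLocusValue hy).deriv]
  have hsin := Real.sin_pos_of_pos_of_lt_pi hy.1 hy.2
  exact div_neg_of_neg_of_pos (neg_neg_of_pos (by positivity)) (by have := hy.1; positivity)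

@[simp]
theorem realLocusValue_zero : realLocusValue 0 = 1 := by simp [realLocusValue]

theorem realLocusValue_lt_one {y : ℝ} (hy : y ∈ Ioo 0 π) : realLocusValue y < 1 :=
  realLocusValue_zero ▸ strictAntiOn_realLocusValue ⟨le_rfl, Real.pi_pos⟩
    (Ioo_subset_Ico_self hy) hy.1

theorem tendsto_realLocusValue_nhdsLT_pi : Tendsto realLocusValue (𝓝[<] π) atBot := by
  have hsinc : Tendsto Real.sinc (𝓝[<] π) (𝓝[>] 0) := by
    refine tendsto_nhdsWithin_iff.2 ⟨?_, ?_⟩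
    · simpa [Real.sinc_of_ne_zero Real.pi_ne_zero] using
        (Real.continuous_sinc.tendsto π).mono_left nhdsWithin_le_nhds
    · filter_upwards [Ioo_mem_nhdsLT Real.pi_pos] with y hy
      exact sinc_pos_of_mem_Ico (Ioo_subset_Ico_self hy)
  have hcos : Tendsto Real.cos (𝓝[<] π) (𝓝 (-1)) := by
    simpa using (Real.continuous_cos.tendsto π).mono_left nhdsWithin_le_nhds
  have hquot : Tendsto (fun y => Real.cos y / Real.sinc y) (𝓝[<] π) atBot := by
    simpa [div_eq_mul_inv] using
      hcos.neg_mul_atTop (by norm_num) (tendsto_inv_nhdsGT_zero.comp hsinc)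
  exact hquot.atBot_add_atBot (Real.tendsto_log_nhdsGT_zero.comp hsinc)

theorem surjOn_realLocusValue : SurjOn realLocusValue (Ioo 0 π) (Iio 1) := by
  intro v hv
  obtain ⟨b, hbv, hb⟩ := ((tendsto_realLocusValue_nhdsLT_pi.eventually
    (eventually_lt_atBot v)).and (Ioo_mem_nhdsLT Real.pi_pos)).exists
  obtain ⟨y, hy, rfl⟩ := intermediate_value_Ioc' hb.1.le
    (continuousOn_realLocusValue.mono (Icc_subset_Ico_right hb.2))
    ⟨hbv.le, realLocusValue_zero ▸ hv⟩
  exact ⟨y, ⟨hy.1, hy.2.trans_lt hb.2⟩, rfl⟩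

noncomputable def pickHeight (t : ℝ) : ℝ := Function.invFunOn realLocusValue (Ioo 0 π) (1 - t)

theorem pickHeight_mem_and_realLocusValue_eq {t : ℝ} (ht : 0 < t) :
    pickHeight t ∈ Ioo 0 π ∧ realLocusValue (pickHeight t) = 1 - t :=
  Function.invFunOn_pos (surjOn_realLocusValue (show 1 - t < 1 by linarith))

theorem pickHeight_eq {t y : ℝ} (hy : y ∈ Ioo 0 π) (h : realLocusValue y = 1 - t) :
    pickHeight t = y := by
  have ht : 0 < t := by linarith [realLocusValue_lt_one hy]
  obtain ⟨hmem, heq⟩ := pickHeight_mem_and_realLocusValue_eq ht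
  exact strictAntiOn_realLocusValue.injOn (Ioo_subset_Ico_self hmem) (Ioo_subset_Ico_self hy)
    (heq.trans h.symm)

theorem mapsTo_pickHeight : MapsTo pickHeight (Ioi 0) (Ioo 0 π) := fun _ ht =>
  (pickHeight_mem_and_realLocusValue_eq ht).1

theorem surjOn_pickHeight : SurjOn pickHeight (Ioi 0) (Ioo 0 π) := fun y hy =>
  ⟨1 - realLocusValue y, by simpa using realLocusValue_lt_one hy, pickHeight_eq hy (by ring)⟩

theorem strictMonoOn_pickHeight : StrictMonoOn pickHeight (Ioi 0) := by
  intro s hs t ht hst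
  obtain ⟨hs_mem, hs_eq⟩ := pickHeight_mem_and_realLocusValue_eq hs
  obtain ⟨ht_mem, ht_eq⟩ := pickHeight_mem_and_realLocusValue_eq ht
  refine (strictAntiOn_realLocusValue.lt_iff_gt (Ioo_subset_Ico_self ht_mem)
    (Ioo_subset_Ico_self hs_mem)).1 ?_
  linarith

/-- For each `t > 0` there is a unique `z(t) ∈ ℂ` with
`0 < Im z(t) < 2π` and `e^{−z(t)} + z(t) = 1 − t`; the function `Y(t) = Im z(t)` is
strictly increasing on `(0,∞)` with `Y(t) → 0` as `t → 0+` and `Y(t) → π` as `t → ∞`. -/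
theorem pick_density_of_inverse :
    ∃ z : ℝ → ℂ,
      (∀ t > (0:ℝ),
        (0 < (z t).im ∧ (z t).im < 2 * Real.pi ∧
          Complex.exp (-(z t)) + z t = 1 - (t : ℂ)) ∧
        ∀ w : ℂ, (0 < w.im ∧ w.im < 2 * Real.pi ∧
          Complex.exp (-w) + w = 1 - (t : ℂ)) → w = z t) ∧
      StrictMonoOn (fun t => (z t).im) (Set.Ioi 0) ∧
      Tendsto (fun t => (z t).im) (nhdsWithin 0 (Set.Ioi 0)) (nhds 0) ∧
      Tendsto (fun t => (z t).im) atTop (nhds Real.pi) := by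
  refine ⟨fun t => realLocus (pickHeight t), fun t ht => ⟨?_, fun w ⟨h0, h2π, hw⟩ => ?_⟩,
    ?_, ?_, ?_⟩
  · obtain ⟨hmem, heq⟩ := pickHeight_mem_and_realLocusValue_eq ht
    refine ⟨by simpa using hmem.1, by simpa using hmem.2.trans (by linarith [Real.pi_pos]), ?_⟩
    rw [exp_neg_realLocus_add_realLocus (sinc_pos_of_mem_Ico (Ioo_subset_Ico_self hmem)), heq,
      ofReal_sub, ofReal_one]
  · obtain ⟨hmem, hw_eq⟩ := eq_realLocus_of_im_eq_zero h0 h2π (by simp [hw])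
    rw [hw_eq, exp_neg_realLocus_add_realLocus
      (sinc_pos_of_mem_Ico (Ioo_subset_Ico_self hmem))] at hw
    show w = realLocus (pickHeight t)
    rw [hw_eq, pickHeight_eq hmem (by exact_mod_cast hw)]
  all_goals simp only [realLocus_im]
  · exact strictMonoOn_pickHeight
  · exact strictMonoOn_pickHeight.monotoneOn.tendsto_nhdsGT_of_surjOn mapsTo_pickHeight
      surjOn_pickHeight Real.pi_pos
  · exact strictMonoOn_pickHeight.monotoneOn.tendsto_atTop_of_surjOn mapsTo_pickHeight
      surjOn_pickHeight Real.pi_pos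
end

section
/- For every x > 0, Watson's function θ(x) = 1 + (x/2)·( ∫_0^1 (t e^{1−t})^x dt − ∫_1^∞ (t e^{1−t})^x dt ) satisfies θ(x) = (x/2)·∫_0^∞ e^{−xt} ξ(t+1) dt = 1/3 + (1/2)·∫_0^∞ e^{−xt} ξ'(t+1) dt, where ξ' is the derivative of ξ on (1,∞). -/
/-!
The substitution `s = ψ(t) = t - log t - 1` maps both `(0, 1)` and `(1, ∞)` onto `(0, ∞)`, and
along it `e^{-v(s+1)} = t` on the first piece and `e^{-u(s+1)} = t` on the second. Hence
`∫₀^∞ e^{-xs} (1/(1 - e^{-v(s+1)}) - 1) ds = ∫₀¹ (t e^{1-t})^x dt`, the `u`-term gives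
`-∫₁^∞ (t e^{1-t})^x dt`, and `2 ∫₀^∞ e^{-xs} ds = 2/x` accounts for the rest: this is the
first identity. The second is an integration by parts, which needs `ξ(1+) = 2/3` and `ξ'` bounded.
Both follow from the relation `-a - log(1 - a) = b - log(1 + b)` between `a = 1 - e^{-v}` and
`b = e^{-u} - 1` (both sides equal `t - 1`): comparing Taylor expansions forces
`b = a + 2a²/3 + 4a³/9 + O(a⁴)`, so `ξ = 1/a - 1/b = 2/3 + O(a²)` and
`ξ' = (1 + b)/b³ - (1 - a)/a³ = O(1)`.
-/

open MeasureTheory Filter Set Topology Real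

namespace Watson

noncomputable def f (s : ℝ) : ℝ := exp (-s) + s

lemma hasDerivAt_f (s : ℝ) : HasDerivAt f (1 - exp (-s)) s := by
  have h : HasDerivAt (fun s => exp (-s)) (exp (-s) * -1) s := (hasDerivAt_neg s).exp
  exact (h.add (hasDerivAt_id s)).congr_deriv (by ring)

lemma one_le_f (s : ℝ) : 1 ≤ f s := by
  have := add_one_le_exp (-s)
  simp only [f]; linarith

lemma f_neg_log {t : ℝ} (ht : 0 < t) : f (-log t) = t - log t := by
  simp [f, exp_log ht, sub_eq_add_neg]

lemma strictMonoOn_f : StrictMonoOn f (Ici 0) := by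
  refine strictMonoOn_of_deriv_pos (convex_Ici 0)
    (fun s _ => (hasDerivAt_f s).continuousAt.continuousWithinAt) fun s hs => ?_
  rw [interior_Ici] at hs
  rw [(hasDerivAt_f s).deriv, sub_pos, exp_lt_one_iff]
  exact neg_lt_zero.2 hs

lemma strictAntiOn_f : StrictAntiOn f (Iic 0) := by
  refine strictAntiOn_of_deriv_neg (convex_Iic 0)
    (fun s _ => (hasDerivAt_f s).continuousAt.continuousWithinAt) fun s hs => ?_
  rw [interior_Iic] at hs
  rw [(hasDerivAt_f s).deriv, sub_neg, one_lt_exp_iff]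
  exact neg_pos.2 hs

lemma hasDerivAt_of_f_eq {w : ℝ → ℝ} {t : ℝ} (hw : ∀ᶠ s in 𝓝 t, f (w s) = s)
    (hc : ContinuousAt w t) (h0 : w t ≠ 0) : HasDerivAt w (1 - exp (-w t))⁻¹ t :=
  .of_local_left_inverse hc (hasDerivAt_f (w t))
    (sub_ne_zero.2 fun h => h0 (by simpa using h.symm)) hw

lemma hasDerivAt_one_div_one_sub_exp_neg {w : ℝ → ℝ} {t : ℝ}
    (hw : ∀ᶠ s in 𝓝 t, f (w s) = s) (hc : ContinuousAt w t) (h0 : w t ≠ 0) :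
    HasDerivAt (fun s => 1 / (1 - exp (-w s))) (-exp (-w t) / (1 - exp (-w t)) ^ 3) t := by
  have hne : 1 - exp (-w t) ≠ 0 := sub_ne_zero.2 fun h => h0 (by simpa using h.symm)
  have hexp : HasDerivAt (fun s => exp (-w s)) (exp (-w t) * -(1 - exp (-w t))⁻¹) t :=
    (hasDerivAt_of_f_eq hw hc h0).neg.exp
  simp only [one_div]
  exact ((hexp.const_sub 1).inv hne).congr_deriv (by field_simp)

section
variable {v : ℝ → ℝ} (hv : ∀ t ≥ (1:ℝ), 0 ≤ v t ∧ exp (-(v t)) + v t = t)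
include hv

lemma v_f_eq {s : ℝ} (hs : 0 ≤ s) : v (f s) = s :=
  strictMonoOn_f.injOn (hv _ (one_le_f s)).1 hs (hv _ (one_le_f s)).2

lemma v_pos {t : ℝ} (ht : 1 < t) : 0 < v t :=
  (hv t ht.le).1.lt_of_ne fun h => ht.ne (by simpa [← h] using (hv t ht.le).2)

lemma strictMonoOn_v : StrictMonoOn v (Ici 1) := fun s hs t ht hst => by
  rw [← strictMonoOn_f.lt_iff_lt (hv s hs).1 (hv t ht).1]
  simpa [f, (hv s hs).2, (hv t ht).2] using hst

lemma continuousAt_v {t : ℝ} (ht : 1 < t) : ContinuousAt v t := by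
  refine (strictMonoOn_v hv).continuousAt_of_image_mem_nhds (Ici_mem_nhds ht)
    (mem_of_superset (Ioi_mem_nhds (v_pos hv ht)) fun s hs => ?_)
  exact ⟨f s, one_le_f s, v_f_eq hv (le_of_lt hs)⟩

lemma hasDerivAt_one_div_one_sub_exp_neg_v {t : ℝ} (ht : 1 < t) :
    HasDerivAt (fun s => 1 / (1 - exp (-v s))) (-exp (-v t) / (1 - exp (-v t)) ^ 3) t :=
  hasDerivAt_one_div_one_sub_exp_neg (eventually_ge_nhds ht |>.mono fun s hs => (hv s hs).2)
    (continuousAt_v hv ht) (v_pos hv ht).ne'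

end

section
variable {u : ℝ → ℝ} (hu : ∀ t ≥ (1:ℝ), u t ≤ 0 ∧ exp (-(u t)) + u t = t)
include hu

lemma u_f_eq {s : ℝ} (hs : s ≤ 0) : u (f s) = s :=
  strictAntiOn_f.injOn (hu _ (one_le_f s)).1 hs (hu _ (one_le_f s)).2

lemma u_neg {t : ℝ} (ht : 1 < t) : u t < 0 :=
  (hu t ht.le).1.lt_of_ne fun h => ht.ne (by simpa [h] using (hu t ht.le).2)

lemma strictAntiOn_u : StrictAntiOn u (Ici 1) := fun s hs t ht hst => by
  rw [← strictAntiOn_f.lt_iff_gt (hu s hs).1 (hu t ht).1]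
  simpa [f, (hu s hs).2, (hu t ht).2] using hst

lemma continuousAt_u {t : ℝ} (ht : 1 < t) : ContinuousAt u t := by
  have : ContinuousAt (-u) t := by
    refine (strictAntiOn_u hu).neg.continuousAt_of_image_mem_nhds (Ici_mem_nhds ht)
      (mem_of_superset (Ioi_mem_nhds (neg_pos.2 (u_neg hu ht))) fun s hs => ?_)
    exact ⟨f (-s), one_le_f _, by simp [u_f_eq hu (neg_nonpos.2 (le_of_lt hs))]⟩
  simpa using this.neg

lemma hasDerivAt_one_div_one_sub_exp_neg_u {t : ℝ} (ht : 1 < t) :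
    HasDerivAt (fun s => 1 / (1 - exp (-u s))) (-exp (-u t) / (1 - exp (-u t)) ^ 3) t :=
  hasDerivAt_one_div_one_sub_exp_neg (eventually_ge_nhds ht |>.mono fun s hs => (hu s hs).2)
    (continuousAt_u hu ht) (u_neg hu ht).ne

end

noncomputable def psi (t : ℝ) : ℝ := t - log t - 1

lemma psi_add_one {t : ℝ} (ht : 0 < t) : psi t + 1 = f (-log t) := by
  rw [f_neg_log ht, psi]; ring

lemma hasDerivAt_psi {t : ℝ} (ht : t ≠ 0) : HasDerivAt psi (1 - t⁻¹) t :=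
  ((hasDerivAt_id t).sub (hasDerivAt_log ht)).sub_const 1

lemma rpow_eq_exp_neg_mul_psi {t : ℝ} (ht : 0 < t) (x : ℝ) :
    (t * exp (1 - t)) ^ x = exp (-x * psi t) := by
  rw [rpow_def_of_pos (by positivity), log_mul ht.ne' (exp_ne_zero _), log_exp, psi]
  ring_nf

lemma integrableOn_rpow_Ioo {x : ℝ} (hx : 0 < x) :
    IntegrableOn (fun t => (t * exp (1 - t)) ^ x) (Ioo 0 1) := by
  refine Measure.integrableOn_of_bounded (M := 1) (by simp [Real.volume_Ioo])
    ((continuous_id.mul (continuous_const.sub continuous_id).rexp).rpow_const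
      fun _ => Or.inr hx.le).aestronglyMeasurable ?_
  filter_upwards [ae_restrict_mem measurableSet_Ioo] with t ht
  have hpos : 0 < t * exp (1 - t) := mul_pos ht.1 (exp_pos _)
  rw [norm_of_nonneg (rpow_nonneg hpos.le x)]
  refine rpow_le_one hpos.le ?_ hx.le
  have h1 := add_one_le_exp (t - 1)
  have h2 : exp (t - 1) * exp (1 - t) = 1 := by rw [← exp_add]; simp
  nlinarith [exp_pos (1 - t)]

lemma integrableOn_rpow_Ioi {x : ℝ} (hx : 0 < x) :
    IntegrableOn (fun t => (t * exp (1 - t)) ^ x) (Ioi 1) := by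
  refine ((exp_neg_integrableOn_Ioi 1 (half_pos hx)).const_mul (exp (x * log 2))).mono' ?_ ?_
  · exact ((continuous_id.mul (continuous_const.sub continuous_id).rexp).rpow_const
      fun _ => Or.inr hx.le).aestronglyMeasurable
  filter_upwards [ae_restrict_mem measurableSet_Ioi] with t ht
  have ht0 : 0 < t := zero_lt_one.trans ht
  rw [norm_of_nonneg (rpow_nonneg (by positivity) x), rpow_eq_exp_neg_mul_psi ht0, ← exp_add]
  refine exp_le_exp.2 ?_
  -- `log (t / 2) ≤ t / 2 - 1` gives `psi t ≥ t / 2 - log 2`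
  have h := log_le_sub_one_of_pos (half_pos ht0)
  rw [log_div ht0.ne' two_ne_zero] at h
  have : t / 2 - log 2 ≤ psi t := by rw [psi]; linarith
  nlinarith

lemma abs_deriv_psi_smul_branch {w : ℝ → ℝ} {t : ℝ} (ht : 0 < t)
    (hw : w (psi t + 1) = -log t) (x : ℝ) :
    |1 - t⁻¹| • (exp (-x * psi t) * (1 / (1 - exp (-w (psi t + 1))) - 1)) =
      |t - 1| / (1 - t) * (t * exp (1 - t)) ^ x := by
  rw [hw, neg_neg, exp_log ht, rpow_eq_exp_neg_mul_psi ht, smul_eq_mul,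
    show 1 - t⁻¹ = (t - 1) / t by field_simp, abs_div, abs_of_pos ht]
  rcases eq_or_ne t 1 with rfl | h1
  · simp
  · have : 1 - t ≠ 0 := sub_ne_zero.2 h1.symm
    field_simp
    ring

lemma integrableOn_and_integral_branch {w : ℝ → ℝ} {S : Set ℝ} (hS : MeasurableSet S)
    (hS0 : S ⊆ Ioi 0) (himage : psi '' S = Ioi 0) (hw : ∀ t ∈ S, w (psi t + 1) = -log t)
    {x : ℝ} (hint : IntegrableOn (fun t => (t * exp (1 - t)) ^ x) S) :
    IntegrableOn (fun s => exp (-x * s) * (1 / (1 - exp (-w (s + 1))) - 1)) (Ioi 0) ∧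
      ∫ s in Ioi 0, exp (-x * s) * (1 / (1 - exp (-w (s + 1))) - 1) =
        ∫ t in S, |t - 1| / (1 - t) * (t * exp (1 - t)) ^ x := by
  have hderiv : ∀ t ∈ S, HasDerivWithinAt psi (1 - t⁻¹) S t :=
    fun t ht => (hasDerivAt_psi (hS0 ht).ne').hasDerivWithinAt
  -- `w` undoes `psi` up to `-log`, which is injective
  have hinj : InjOn psi S := fun s hs t ht hst => by
    have := hw s hs
    rw [hst, hw t ht, neg_inj] at this
    exact log_injOn_pos (hS0 hs) (hS0 ht) this.symm
  have hcongr : EqOn (fun t => |1 - t⁻¹| •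
      (exp (-x * psi t) * (1 / (1 - exp (-w (psi t + 1))) - 1)))
      (fun t => |t - 1| / (1 - t) * (t * exp (1 - t)) ^ x) S :=
    fun t ht => abs_deriv_psi_smul_branch (hS0 ht) (hw t ht) x
  rw [← himage, integrableOn_image_iff_integrableOn_abs_deriv_smul hS hderiv hinj,
    integral_image_eq_integral_abs_deriv_smul hS hderiv hinj, setIntegral_congr_fun hS hcongr,
    integrableOn_congr_fun hcongr hS]
  have hmeas : Measurable fun t : ℝ => |t - 1| / (1 - t) :=
    (measurable_id.sub_const 1).abs.div (measurable_const.sub measurable_id)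
  refine ⟨hint.bdd_mul (c := 1) hmeas.aestronglyMeasurable (ae_of_all _ fun t => ?_), rfl⟩
  rw [norm_div, norm_of_nonneg (abs_nonneg _), ← abs_sub_comm, Real.norm_eq_abs]
  exact div_self_le_one _

section
variable {v : ℝ → ℝ} (hv : ∀ t ≥ (1:ℝ), 0 ≤ v t ∧ exp (-(v t)) + v t = t)
include hv

lemma v_psi_add_one {t : ℝ} (ht0 : 0 < t) (ht1 : t ≤ 1) : v (psi t + 1) = -log t := by
  rw [psi_add_one ht0]
  exact v_f_eq hv (neg_nonneg.2 (log_nonpos ht0.le ht1))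

lemma psi_image_Ioo : psi '' Ioo 0 1 = Ioi 0 := by
  refine Subset.antisymm ?_ fun s hs => ?_
  · rintro _ ⟨t, ht, rfl⟩
    have := log_lt_sub_one_of_pos ht.1 ht.2.ne
    rw [mem_Ioi, psi]; linarith
  · have hs1 : 1 < s + 1 := lt_add_of_pos_left 1 hs
    refine ⟨exp (-v (s + 1)),
      ⟨exp_pos _, exp_lt_one_iff.2 (neg_lt_zero.2 (v_pos hv hs1))⟩, ?_⟩
    have := (hv (s + 1) hs1.le).2
    rw [psi, log_exp]; linarith

lemma integrableOn_and_integral_branch_v {x : ℝ} (hx : 0 < x) :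
    IntegrableOn (fun s => exp (-x * s) * (1 / (1 - exp (-v (s + 1))) - 1)) (Ioi 0) ∧
      ∫ s in Ioi 0, exp (-x * s) * (1 / (1 - exp (-v (s + 1))) - 1) =
        ∫ t in Ioo 0 1, (t * exp (1 - t)) ^ x := by
  obtain ⟨hint, heq⟩ := integrableOn_and_integral_branch measurableSet_Ioo (fun t ht => ht.1)
    (psi_image_Ioo hv) (fun t ht => v_psi_add_one hv ht.1 ht.2.le) (integrableOn_rpow_Ioo hx)
  refine ⟨hint, heq.trans (setIntegral_congr_fun measurableSet_Ioo fun t ht => ?_)⟩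
  have : 0 < 1 - t := sub_pos.2 ht.2
  simp [abs_sub_comm t 1, abs_of_pos this, this.ne']

end

section
variable {u : ℝ → ℝ} (hu : ∀ t ≥ (1:ℝ), u t ≤ 0 ∧ exp (-(u t)) + u t = t)
include hu

lemma u_psi_add_one {t : ℝ} (ht : 1 ≤ t) : u (psi t + 1) = -log t := by
  rw [psi_add_one (zero_lt_one.trans_le ht)]
  exact u_f_eq hu (neg_nonpos.2 (log_nonneg ht))

lemma psi_image_Ioi : psi '' Ioi 1 = Ioi 0 := by
  refine Subset.antisymm ?_ fun s hs => ?_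
  · rintro _ ⟨t, ht, rfl⟩
    have := log_lt_sub_one_of_pos (zero_lt_one.trans ht) (ne_of_gt ht)
    rw [mem_Ioi, psi]; linarith
  · have hs1 : 1 < s + 1 := lt_add_of_pos_left 1 hs
    refine ⟨exp (-u (s + 1)), one_lt_exp_iff.2 (neg_pos.2 (u_neg hu hs1)), ?_⟩
    have := (hu (s + 1) hs1.le).2
    rw [psi, log_exp]; linarith

lemma integrableOn_and_integral_branch_u {x : ℝ} (hx : 0 < x) :
    IntegrableOn (fun s => exp (-x * s) * (1 / (1 - exp (-u (s + 1))) - 1)) (Ioi 0) ∧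
      ∫ s in Ioi 0, exp (-x * s) * (1 / (1 - exp (-u (s + 1))) - 1) =
        -∫ t in Ioi 1, (t * exp (1 - t)) ^ x := by
  obtain ⟨hint, heq⟩ := integrableOn_and_integral_branch measurableSet_Ioi
    (fun _ ht => zero_lt_one.trans (mem_Ioi.1 ht)) (psi_image_Ioi hu)
    (fun t ht => u_psi_add_one hu ht.le) (integrableOn_rpow_Ioi hx)
  refine ⟨hint, heq.trans ?_⟩
  rw [← integral_neg]
  refine setIntegral_congr_fun measurableSet_Ioi fun t ht => ?_
  have : 0 < t - 1 := sub_pos.2 ht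
  rw [abs_of_pos this, ← neg_sub t 1, div_neg, div_self this.ne']
  ring

end

lemma abs_log_one_sub_add_le {x : ℝ} (hx : |x| ≤ 1 / 2) :
    |x + x ^ 2 / 2 + x ^ 3 / 3 + x ^ 4 / 4 + log (1 - x)| ≤ 2 * |x| ^ 5 := by
  have h := abs_log_sub_add_sum_range_le (hx.trans_lt (by norm_num)) 4
  norm_num [Finset.sum_range_succ] at h
  refine h.trans ?_
  rw [div_le_iff₀ (by linarith)]
  nlinarith [pow_nonneg (abs_nonneg x) 5]

lemma abs_neg_sub_log_one_sub_sub_le {a : ℝ} (ha0 : 0 ≤ a) (ha1 : a ≤ 1 / 2) :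
    |-a - log (1 - a) - (a ^ 2 / 2 + a ^ 3 / 3 + a ^ 4 / 4)| ≤ 2 * a ^ 5 := by
  have := abs_log_one_sub_add_le (x := a) (by rwa [abs_of_nonneg ha0])
  rw [abs_of_nonneg ha0, ← abs_neg] at this
  convert this using 2; ring

lemma abs_sub_log_one_add_sub_le {y : ℝ} (hy0 : 0 ≤ y) (hy1 : y ≤ 1 / 2) :
    |y - log (1 + y) - (y ^ 2 / 2 - y ^ 3 / 3 + y ^ 4 / 4)| ≤ 2 * y ^ 5 := by
  have := abs_log_one_sub_add_le (x := -y) (by rwa [abs_neg, abs_of_nonneg hy0])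
  rw [abs_neg, abs_of_nonneg hy0, sub_neg_eq_add, ← abs_neg] at this
  convert this using 2; ring

lemma sq_div_two_le_neg_sub_log_one_sub {a : ℝ} (ha0 : 0 ≤ a) (ha1 : a < 1) :
    a ^ 2 / 2 ≤ -a - log (1 - a) := by
  have h := sum_le_hasSum (Finset.range 2) (fun n _ => by positivity)
    (hasSum_pow_div_log_of_abs_lt_one (by rwa [abs_of_nonneg ha0]))
  norm_num [Finset.sum_range_succ] at h
  linarith

lemma strictMonoOn_sub_log_one_add : StrictMonoOn (fun y => y - log (1 + y)) (Ici 0) := by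
  intro y hy z hz hyz
  have hy' : 0 < 1 + y := by linarith [mem_Ici.1 hy]
  have hne : (1 + z) / (1 + y) ≠ 1 := by rw [Ne, div_eq_one_iff_eq hy'.ne']; linarith
  have hlog := log_lt_sub_one_of_pos (div_pos (by linarith) hy') hne
  rw [log_div (by linarith) hy'.ne'] at hlog
  have : (1 + z) / (1 + y) - 1 ≤ z - y := by
    rw [div_sub_one hy'.ne', div_le_iff₀ hy']
    nlinarith [mem_Ici.1 hy]
  dsimp only
  linarith

lemma pow_mul_le_div_ten {a : ℝ} (h0 : 0 ≤ a) (h1 : a ≤ 1 / 10) (k : ℕ) :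
    a ^ k * a ≤ a ^ k / 10 := by
  nlinarith [pow_nonneg h0 k]

section
variable {a b : ℝ} (ha0 : 0 < a) (hb : 0 ≤ b) (h : -a - log (1 - a) = b - log (1 + b))
include ha0 hb h

lemma le_of_neg_sub_log_one_sub_eq (ha1 : a < 1) : a ≤ b := by
  have hsum := le_hasSum (hasSum_log_sub_log_of_abs_lt_one (by rwa [abs_of_pos ha0])) 0
    (fun n _ => by positivity)
  norm_num at hsum
  rw [← strictMonoOn_sub_log_one_add.le_iff_le ha0.le hb]
  linarith

lemma le_of_taylor_lt (ha1 : a ≤ 1 / 2) {y : ℝ} (hy0 : 0 ≤ y) (hy1 : y ≤ 1 / 2)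
    (hpoly : y ^ 2 / 2 - y ^ 3 / 3 + y ^ 4 / 4 + 2 * y ^ 5 <
      a ^ 2 / 2 + a ^ 3 / 3 + a ^ 4 / 4 - 2 * a ^ 5) : y ≤ b := by
  by_contra! hby
  have := strictMonoOn_sub_log_one_add hb hy0 hby
  dsimp only at this
  linarith [abs_le.1 (abs_neg_sub_log_one_sub_sub_le ha0.le ha1),
    abs_le.1 (abs_sub_log_one_add_sub_le hy0 hy1)]

lemma ge_of_lt_taylor (ha1 : a ≤ 1 / 2) {y : ℝ} (hy0 : 0 ≤ y) (hy1 : y ≤ 1 / 2)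
    (hpoly : a ^ 2 / 2 + a ^ 3 / 3 + a ^ 4 / 4 + 2 * a ^ 5 <
      y ^ 2 / 2 - y ^ 3 / 3 + y ^ 4 / 4 - 2 * y ^ 5) : b ≤ y := by
  by_contra! hby
  have := strictMonoOn_sub_log_one_add hy0 hb hby
  dsimp only at this
  linarith [abs_le.1 (abs_neg_sub_log_one_sub_sub_le ha0.le ha1),
    abs_le.1 (abs_sub_log_one_add_sub_le hy0 hy1)]

lemma abs_sub_le_of_neg_sub_log_one_sub_eq (ha1 : a ≤ 1 / 10) :
    |b - (a + 2 / 3 * a ^ 2 + 4 / 9 * a ^ 3)| ≤ 20 * a ^ 4 := by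
  -- polynomial inequalities on `(0, 1/10]`, certified by `0 < a ^ k` and `a ^ (k+1) ≤ a ^ k / 10`
  have hc := pow_mul_le_div_ten ha0.le ha1
  have hp := fun k : ℕ => pow_pos ha0 k
  have hlo := le_of_taylor_lt ha0 hb h (y := a + 2 / 3 * a ^ 2 + 4 / 9 * a ^ 3 - 20 * a ^ 4)
    (by linarith) (by linarith [hc 1, hc 2, hc 3, hp 1, hp 2, hp 3, hp 4])
    (by linarith [hc 1, hc 2, hc 3, hp 1, hp 2, hp 3, hp 4])
    (by linarith [hc 1, hc 2, hc 3, hc 4, hc 5, hc 6, hc 7, hc 8, hc 9, hc 10, hc 11, hc 12, hc 13,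
      hc 14, hc 15, hc 16, hc 17, hc 18, hc 19, hp 1, hp 2, hp 3, hp 4, hp 5, hp 6, hp 7, hp 8,
      hp 9, hp 10, hp 11, hp 12, hp 13, hp 14, hp 15, hp 16, hp 17, hp 18, hp 19, hp 20])
  have hhi := ge_of_lt_taylor ha0 hb h (y := a + 2 / 3 * a ^ 2 + 4 / 9 * a ^ 3 + 20 * a ^ 4)
    (by linarith) (by positivity) (by linarith [hc 1, hc 2, hc 3, hp 1, hp 2, hp 3, hp 4])
    (by linarith [hc 1, hc 2, hc 3, hc 4, hc 5, hc 6, hc 7, hc 8, hc 9, hc 10, hc 11, hc 12, hc 13,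
      hc 14, hc 15, hc 16, hc 17, hc 18, hc 19, hp 1, hp 2, hp 3, hp 4, hp 5, hp 6, hp 7, hp 8,
      hp 9, hp 10, hp 11, hp 12, hp 13, hp 14, hp 15, hp 16, hp 17, hp 18, hp 19, hp 20])
  rw [abs_le]
  constructor <;> linarith

lemma abs_one_div_sub_one_div_sub_le (ha1 : a ≤ 1 / 10) :
    |1 / a - 1 / b - 2 / 3| ≤ 21 * a ^ 2 := by
  have he := abs_le.1 (abs_sub_le_of_neg_sub_log_one_sub_eq ha0 hb h ha1)
  have hab := le_of_neg_sub_log_one_sub_eq ha0 hb h (by linarith)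
  have hb0 : 0 < b := ha0.trans_le hab
  -- the numerator `b (1 - 2a/3) - a`, rearranged to show that it is `O(a⁴)`
  have hnum : |(b - (a + 2 / 3 * a ^ 2 + 4 / 9 * a ^ 3)) * (1 - 2 / 3 * a) - 8 / 27 * a ^ 4| ≤
      21 * a ^ 4 := by
    rw [abs_le]; constructor <;> nlinarith [pow_pos ha0 4]
  rw [show 1 / a - 1 / b - 2 / 3 = ((b - (a + 2 / 3 * a ^ 2 + 4 / 9 * a ^ 3)) * (1 - 2 / 3 * a)
      - 8 / 27 * a ^ 4) / (a * b) by field_simp; ring, abs_div, abs_of_pos (mul_pos ha0 hb0),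
    div_le_iff₀ (mul_pos ha0 hb0)]
  nlinarith [mul_le_mul_of_nonneg_left hab (by positivity : (0:ℝ) ≤ 21 * a ^ 2 * a)]

lemma abs_one_add_div_cube_sub_le_of_le (ha1 : a ≤ 1 / 10) :
    |(1 + b) / b ^ 3 - (1 - a) / a ^ 3| ≤ 100 := by
  have he := abs_le.1 (abs_sub_le_of_neg_sub_log_one_sub_eq ha0 hb h ha1)
  have hab := le_of_neg_sub_log_one_sub_eq ha0 hb h (by linarith)
  have hb0 : 0 < b := ha0.trans_le hab
  have hc := pow_mul_le_div_ten ha0.le ha1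
  have hp := fun k : ℕ => pow_pos ha0 k
  obtain ⟨y, hy⟩ : ∃ y, y = a + 2 / 3 * a ^ 2 + 4 / 9 * a ^ 3 - 20 * a ^ 4 := ⟨_, rfl⟩
  obtain ⟨z, hz⟩ : ∃ z, z = a + 2 / 3 * a ^ 2 + 4 / 9 * a ^ 3 + 20 * a ^ 4 := ⟨_, rfl⟩
  have hy0 : 0 ≤ y := by rw [hy]; linarith [hc 1, hc 2, hc 3, hp 1, hp 2, hp 3, hp 4]
  have hyb : y ^ 3 ≤ b ^ 3 := pow_le_pow_left₀ hy0 (by linarith) 3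
  have hbz : b ^ 3 ≤ z ^ 3 := pow_le_pow_left₀ hb0.le (by linarith) 3
  -- the numerator `a³(1 + b) - (1 - a) b³` is `O(a⁶)`
  have hup : a ^ 3 * (1 + z) - (1 - a) * y ^ 3 ≤ 100 * a ^ 6 := by
    rw [hy, hz]
    linarith [hc 1, hc 2, hc 3, hc 4, hc 5, hc 6, hc 7, hc 8, hc 9, hc 10, hc 11, hc 12, hp 1,
      hp 2, hp 3, hp 4, hp 5, hp 6, hp 7, hp 8, hp 9, hp 10, hp 11, hp 12, hp 13]
  have hlo : -(100 * a ^ 6) ≤ a ^ 3 * (1 + y) - (1 - a) * z ^ 3 := by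
    rw [hy, hz]
    linarith [hc 1, hc 2, hc 3, hc 4, hc 5, hc 6, hc 7, hc 8, hc 9, hc 10, hc 11, hc 12, hp 1,
      hp 2, hp 3, hp 4, hp 5, hp 6, hp 7, hp 8, hp 9, hp 10, hp 11, hp 12, hp 13]
  have hnum : |a ^ 3 * (1 + b) - (1 - a) * b ^ 3| ≤ 100 * a ^ 6 := by
    rw [abs_le]; constructor
    · nlinarith [mul_le_mul_of_nonneg_left hbz (by linarith : (0:ℝ) ≤ 1 - a)]
    · nlinarith [mul_le_mul_of_nonneg_left hyb (by linarith : (0:ℝ) ≤ 1 - a)]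
  have hpos : 0 < a ^ 3 * b ^ 3 := by positivity
  rw [show (1 + b) / b ^ 3 - (1 - a) / a ^ 3 = (a ^ 3 * (1 + b) - (1 - a) * b ^ 3) / (a ^ 3 * b ^ 3)
      by field_simp, abs_div, abs_of_pos hpos, div_le_iff₀ hpos]
  nlinarith [pow_le_pow_left₀ ha0.le hab 3, hp 3]

lemma abs_one_add_div_cube_sub_le (ha1 : a < 1) :
    |(1 + b) / b ^ 3 - (1 - a) / a ^ 3| ≤ 1100 := by
  rcases le_or_gt a (1 / 10) with ha | ha
  · linarith [abs_one_add_div_cube_sub_le_of_le ha0 hb h ha]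
  have hb' : 1 / 10 < b := ha.trans_le (le_of_neg_sub_log_one_sub_eq ha0 hb h ha1)
  have hb2 : 1 / 100 < b ^ 2 := by nlinarith
  have hb3 : 1 / 1000 < b ^ 3 := by nlinarith
  have ha2 : 1 / 100 < a ^ 2 := by nlinarith
  have ha3 : 1 / 1000 < a ^ 3 := by nlinarith
  have h1 : (1 + b) / b ^ 3 ≤ 1100 := by
    rw [div_le_iff₀ (by positivity)]; nlinarith
  have h2 : (1 - a) / a ^ 3 ≤ 1000 := by
    rw [div_le_iff₀ (by positivity)]; nlinarith
  have h3 : 0 ≤ (1 + b) / b ^ 3 := by positivity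
  have h4 : 0 ≤ (1 - a) / a ^ 3 := div_nonneg (by linarith) (by positivity)
  rw [abs_le]; constructor <;> linarith

end

section
variable {u v ξ ξ' : ℝ → ℝ}
  (hu : ∀ t ≥ (1:ℝ), u t ≤ 0 ∧ exp (-(u t)) + u t = t)
  (hv : ∀ t ≥ (1:ℝ), 0 ≤ v t ∧ exp (-(v t)) + v t = t)
  (hξ : ∀ t > (1:ℝ), ξ t = 1 / (1 - exp (-(v t))) + 1 / (1 - exp (-(u t))))
  (hξ' : ∀ t > (1:ℝ), HasDerivAt ξ (ξ' t) t)

include hu hv hξ in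
lemma integrableOn_and_integral_exp_mul_xi {x : ℝ} (hx : 0 < x) :
    IntegrableOn (fun s => exp (-x * s) * ξ (s + 1)) (Ioi 0) ∧
      ∫ s in Ioi 0, exp (-x * s) * ξ (s + 1) =
        (∫ t in Ioo 0 1, (t * exp (1 - t)) ^ x) - (∫ t in Ioi 1, (t * exp (1 - t)) ^ x) +
          2 / x := by
  obtain ⟨hintv, heqv⟩ := integrableOn_and_integral_branch_v hv hx
  obtain ⟨hintu, hequ⟩ := integrableOn_and_integral_branch_u hu hx
  have hint2 := (exp_neg_integrableOn_Ioi 0 hx).const_mul 2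
  have hsplit : EqOn (fun s => exp (-x * s) * ξ (s + 1))
      (fun s => exp (-x * s) * (1 / (1 - exp (-v (s + 1))) - 1) +
        exp (-x * s) * (1 / (1 - exp (-u (s + 1))) - 1) + 2 * exp (-x * s)) (Ioi 0) :=
    fun s hs => by
      simp only [hξ (s + 1) (lt_add_of_pos_left 1 hs)]
      ring
  refine ⟨((hintv.fun_add hintu).fun_add hint2).congr_fun hsplit.symm measurableSet_Ioi, ?_⟩
  rw [setIntegral_congr_fun measurableSet_Ioi hsplit, integral_add (hintv.fun_add hintu) hint2,
    integral_add hintv hintu, heqv, hequ, integral_const_mul,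
    integral_exp_mul_Ioi (neg_lt_zero.2 hx), mul_zero, exp_zero]
  field_simp
  ring

include hv in
lemma one_sub_exp_neg_v_pos {τ : ℝ} (hτ : 1 < τ) : 0 < 1 - exp (-v τ) :=
  sub_pos.2 (exp_lt_one_iff.2 (neg_lt_zero.2 (v_pos hv hτ)))

include hu in
lemma exp_neg_u_sub_one_pos {τ : ℝ} (hτ : 1 < τ) : 0 < exp (-u τ) - 1 :=
  sub_pos.2 (one_lt_exp_iff.2 (neg_pos.2 (u_neg hu hτ)))

include hu hv in
lemma neg_sub_log_one_sub_eq_branches {τ : ℝ} (hτ : 1 ≤ τ) :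
    -(1 - exp (-v τ)) - log (1 - (1 - exp (-v τ))) =
      exp (-u τ) - 1 - log (1 + (exp (-u τ) - 1)) := by
  simp only [sub_sub_cancel, add_sub_cancel, log_exp]
  linarith [(hu τ hτ).2, (hv τ hτ).2]

include hξ in
lemma xi_eq {τ : ℝ} (hτ : 1 < τ) : ξ τ = 1 / (1 - exp (-v τ)) - 1 / (exp (-u τ) - 1) := by
  rw [hξ τ hτ, ← neg_sub (exp (-u τ)), div_neg]
  ring

include hu hv hξ in
lemma abs_xi_sub_le {τ : ℝ} (hτ : 1 < τ) (hτ' : τ ≤ 1 + 1 / 200) :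
    |ξ τ - 2 / 3| ≤ 42 * (τ - 1) := by
  have ha0 := one_sub_exp_neg_v_pos hv hτ
  -- `a = 1 - exp (-v τ)` satisfies `a² / 2 ≤ -a - log (1 - a) = τ - 1`
  have hτ1 : -(1 - exp (-v τ)) - log (1 - (1 - exp (-v τ))) = τ - 1 := by
    simp only [sub_sub_cancel, log_exp]; linarith [(hv τ hτ.le).2]
  have hsq := sq_div_two_le_neg_sub_log_one_sub ha0.le (sub_lt_self 1 (exp_pos _))
  have ha1 : 1 - exp (-v τ) ≤ 1 / 10 := by nlinarith
  rw [xi_eq hξ hτ]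
  linarith [abs_one_div_sub_one_div_sub_le ha0 (exp_neg_u_sub_one_pos hu hτ).le
    (neg_sub_log_one_sub_eq_branches hu hv hτ.le) ha1]

include hu hv hξ in
lemma tendsto_xi_add_one : Tendsto (fun s => ξ (s + 1)) (𝓝[>] 0) (𝓝 (2 / 3)) := by
  rw [tendsto_iff_norm_sub_tendsto_zero]
  refine squeeze_zero' (Eventually.of_forall fun _ => norm_nonneg _) ?_
    ((continuous_const.mul continuous_id).tendsto' 0 0 (by simp) |>.mono_left nhdsWithin_le_nhds
      (f := fun s : ℝ => 42 * s))
  filter_upwards [Ioo_mem_nhdsGT (by norm_num : (0:ℝ) < 1 / 200)] with s hs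
  simpa using abs_xi_sub_le hu hv hξ (τ := s + 1) (by linarith [hs.1]) (by linarith [hs.2])

include hu hv hξ in
lemma abs_xi_le {τ : ℝ} (hτ : 2 ≤ τ) : |ξ τ| ≤ 1 / (1 - exp (-v 2)) := by
  have hτ1 : 1 < τ := by linarith
  have ha0 := one_sub_exp_neg_v_pos hv hτ1
  have hb0 := exp_neg_u_sub_one_pos hu hτ1
  have hmono : 1 - exp (-v 2) ≤ 1 - exp (-v τ) := by
    have := (strictMonoOn_v hv).monotoneOn (by norm_num : (2:ℝ) ∈ Ici 1) (mem_Ici.2 hτ1.le) hτ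
    linarith [exp_le_exp.2 (neg_le_neg this)]
  have hab : 1 / (exp (-u τ) - 1) ≤ 1 / (1 - exp (-v τ)) :=
    one_div_le_one_div_of_le ha0 (le_of_neg_sub_log_one_sub_eq ha0 hb0.le
      (neg_sub_log_one_sub_eq_branches hu hv hτ1.le) (sub_lt_self 1 (exp_pos _)))
  rw [xi_eq hξ hτ1, abs_of_nonneg (sub_nonneg.2 hab)]
  calc _ ≤ 1 / (1 - exp (-v τ)) := sub_le_self _ (by positivity)
    _ ≤ _ := one_div_le_one_div_of_le (one_sub_exp_neg_v_pos hv one_lt_two) hmono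

include hu hv hξ hξ' in
lemma xi'_eq {τ : ℝ} (hτ : 1 < τ) :
    ξ' τ = (1 + (exp (-u τ) - 1)) / (exp (-u τ) - 1) ^ 3 -
      (1 - (1 - exp (-v τ))) / (1 - exp (-v τ)) ^ 3 := by
  have hd := (hasDerivAt_one_div_one_sub_exp_neg_v hv hτ).add
    (hasDerivAt_one_div_one_sub_exp_neg_u hu hτ)
  have heq : (fun s => 1 / (1 - exp (-v s)) + 1 / (1 - exp (-u s))) =ᶠ[𝓝 τ] ξ :=
    (eventually_gt_nhds hτ).mono fun s hs => (hξ s hs).symm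
  rw [(hξ' τ hτ).unique (hd.congr_of_eventuallyEq heq.symm)]
  have hb := exp_neg_u_sub_one_pos hu hτ
  have hne : 1 - exp (-u τ) ≠ 0 := (sub_neg.2 (lt_of_sub_pos hb)).ne
  field_simp [hb.ne']
  ring

include hu hv hξ hξ' in
lemma abs_xi'_le {τ : ℝ} (hτ : 1 < τ) : |ξ' τ| ≤ 1100 := by
  rw [xi'_eq hu hv hξ hξ' hτ]
  exact abs_one_add_div_cube_sub_le (one_sub_exp_neg_v_pos hv hτ)
    (exp_neg_u_sub_one_pos hu hτ).le (neg_sub_log_one_sub_eq_branches hu hv hτ.le)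
    (sub_lt_self 1 (exp_pos _))

include hu hv hξ hξ' in
lemma integrableOn_exp_mul_xi' {x : ℝ} (hx : 0 < x) :
    IntegrableOn (fun s => exp (-x * s) * ξ' (s + 1)) (Ioi 0) := by
  -- `ξ'` agrees with the measurable function `deriv ξ` on `(1, ∞)`
  have hmeas :
      AEStronglyMeasurable (fun s => exp (-x * s) * ξ' (s + 1)) (volume.restrict (Ioi 0)) :=
    ((by fun_prop : Measurable fun s => exp (-x * s)).mul
      ((measurable_deriv ξ).comp (measurable_add_const 1))).aestronglyMeasurable.congr
      ((ae_restrict_mem measurableSet_Ioi).mono fun s hs => by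
        simp [(hξ' (s + 1) (lt_add_of_pos_left 1 hs)).deriv])
  refine ((exp_neg_integrableOn_Ioi 0 hx).const_mul 1100).mono' hmeas ?_
  filter_upwards [ae_restrict_mem measurableSet_Ioi] with s hs
  rw [norm_mul, norm_of_nonneg (exp_pos _).le, mul_comm, Real.norm_eq_abs]
  exact mul_le_mul_of_nonneg_right (abs_xi'_le hu hv hξ hξ' (lt_add_of_pos_left 1 hs))
    (exp_pos _).le

include hu hv hξ hξ' in
lemma integral_exp_mul_xi' {x : ℝ} (hx : 0 < x) :
    ∫ s in Ioi 0, exp (-x * s) * ξ' (s + 1) =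
      x * (∫ s in Ioi 0, exp (-x * s) * ξ (s + 1)) - 2 / 3 := by
  have hint := (integrableOn_and_integral_exp_mul_xi hu hv hξ hx).1
  have hzero : Tendsto (fun s => exp (-x * s) * ξ (s + 1)) (𝓝[>] 0) (𝓝 (2 / 3)) := by
    simpa using ((continuous_exp.comp (continuous_const_mul (-x))).tendsto' 0 1 (by simp)
      |>.mono_left nhdsWithin_le_nhds).mul (tendsto_xi_add_one hu hv hξ)
  have hexp : Tendsto (fun s => exp (-x * s)) atTop (𝓝 0) :=
    tendsto_exp_atBot.comp (tendsto_id.const_mul_atTop_of_neg (neg_lt_zero.2 hx))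
  have hinfty : Tendsto (fun s => exp (-x * s) * ξ (s + 1)) atTop (𝓝 0) :=
    hexp.zero_mul_isBoundedUnder_le (isBoundedUnder_of_eventually_le
      ((eventually_ge_atTop 1).mono fun s hs => abs_xi_le hu hv hξ (by linarith)))
  have hderiv_exp :
      ∀ s ∈ Ioi (0:ℝ), HasDerivAt (fun s => exp (-x * s)) (-x * exp (-x * s)) s :=
    fun s _ => (((hasDerivAt_id' s).const_mul (-x)).exp).congr_deriv (by ring)
  have hderiv_xi : ∀ s ∈ Ioi (0:ℝ), HasDerivAt (fun s => ξ (s + 1)) (ξ' (s + 1)) s :=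
    fun s hs => (hξ' (s + 1) (lt_add_of_pos_left 1 hs)).comp_add_const s 1
  have hibp := integral_Ioi_mul_deriv_eq_deriv_mul hderiv_exp hderiv_xi
    (integrableOn_exp_mul_xi' hu hv hξ hξ' hx)
    (IntegrableOn.congr_fun (hint.const_mul (-x)) (fun s _ => by simp only [Pi.mul_apply]; ring)
      measurableSet_Ioi) hzero hinfty
  simp only [mul_assoc, integral_const_mul] at hibp
  linarith

end

end Watson

/-- Watson's function
`θ(x) = 1 + (x/2)(∫_0^1 (t e^{1−t})^x dt − ∫_1^∞ (t e^{1−t})^x dt)` satisfies, for every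
`x > 0`, `θ(x) = (x/2)∫_0^∞ e^{−xt} ξ(t+1) dt = 1/3 + (1/2)∫_0^∞ e^{−xt} ξ'(t+1) dt`.
Here `u t ≤ 0 ≤ v t` are the two solutions of `e^{-s} + s = t` for `t ≥ 1`,
`ξ(t) = 1/(1 − e^{-v t}) + 1/(1 − e^{-u t})` for `t > 1`, and `ξ'` is the derivative of
`ξ` on `(1,∞)`. -/
theorem watson_theta_eq (u v ξ ξ' : ℝ → ℝ)
    (hu : ∀ t ≥ (1:ℝ), u t ≤ 0 ∧ Real.exp (-(u t)) + u t = t)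
    (hv : ∀ t ≥ (1:ℝ), 0 ≤ v t ∧ Real.exp (-(v t)) + v t = t)
    (hξ : ∀ t > (1:ℝ),
      ξ t = 1/(1 - Real.exp (-(v t))) + 1/(1 - Real.exp (-(u t))))
    (hξ' : ∀ t > (1:ℝ), HasDerivAt ξ (ξ' t) t) :
    ∀ x > (0:ℝ),
      (1 + (x/2) * ((∫ t in (0:ℝ)..1, (t * Real.exp (1 - t)) ^ x) -
          ∫ t in Set.Ioi (1:ℝ), (t * Real.exp (1 - t)) ^ x) =
        (x/2) * ∫ t in Set.Ioi (0:ℝ), Real.exp (-x * t) * ξ (t + 1)) ∧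
      (1 + (x/2) * ((∫ t in (0:ℝ)..1, (t * Real.exp (1 - t)) ^ x) -
          ∫ t in Set.Ioi (1:ℝ), (t * Real.exp (1 - t)) ^ x) =
        1/3 + (1/2) * ∫ t in Set.Ioi (0:ℝ), Real.exp (-x * t) * ξ' (t + 1)) := by
  intro x hx
  have hfirst : 1 + (x/2) * ((∫ t in (0:ℝ)..1, (t * Real.exp (1 - t)) ^ x) -
      ∫ t in Set.Ioi (1:ℝ), (t * Real.exp (1 - t)) ^ x) =
      (x/2) * ∫ t in Set.Ioi (0:ℝ), Real.exp (-x * t) * ξ (t + 1) := by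
    rw [(Watson.integrableOn_and_integral_exp_mul_xi hu hv hξ hx).2,
      intervalIntegral.integral_of_le zero_le_one, integral_Ioc_eq_integral_Ioo]
    field_simp
    ring
  refine ⟨hfirst, ?_⟩
  rw [hfirst, Watson.integral_exp_mul_xi' hu hv hξ hξ' hx]
  ring
end
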